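/- arXiv:2206.15341 — 4 statements merged into one kernel-verified Lean document; each statement's English description precedes it below -/
import Mathlib

section
/- Let m ≥ 3 and partition [2m] into U = {u₁,...,u_m} and W = {w₁,...,w_m}. Define X₁ as the set of 3-subsets lying entirely within U or entirely within W; X₂ as the set of 3-subsets of the form {u_i, u_j, w_i} or {w_i, w_j, u_i} with i ≠ j; and X₃ as the set of 3-subsets of the form {u_i, u_j, w_k} or {w_i, w_j, u_k} with i, j, k pairwise distinct. Then Π = {X₁, X₂, X₃} is an equitable 3-partition of J(2m,3) with quotient matrix [[3m-9, 6, 3m-6], [m-2, 2m-1, 3m-6], [m-2, 6, 5m-13]]. -/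
set_option linter.unusedSectionVars false
set_option linter.unusedVariables false
set_option maxHeartbeats 1000000


open Finset

/-- Number of neighbours (in `J(n,3)`, i.e. triples meeting in 2 elements)
of the triple `s` inside the cell `X`. -/
def nbc {n : ℕ} (X : Finset (Finset (Fin n))) (s : Finset (Fin n)) : ℕ :=
  (X.filter fun t => (s ∩ t).card = 2).card

/-- `X₁`: triples lying entirely within `U = range u` or within `W = range w`. -/
def Y1 {n m : ℕ} (u w : Fin m → Fin n) : Finset (Finset (Fin n)) :=
  Finset.univ.filter fun s => s.card = 3 ∧
    ((∀ x ∈ s, ∃ i, u i = x) ∨ (∀ x ∈ s, ∃ i, w i = x))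

/-- `X₂`: triples of the form `{uᵢ, uⱼ, wᵢ}` or `{wᵢ, wⱼ, uᵢ}` with `i ≠ j`. -/
def Y2 {n m : ℕ} (u w : Fin m → Fin n) : Finset (Finset (Fin n)) :=
  Finset.univ.filter fun s => ∃ i j, i ≠ j ∧
    (s = {u i, u j, w i} ∨ s = {w i, w j, u i})

/-- `X₃`: triples of the form `{uᵢ, uⱼ, w_k}` or `{wᵢ, wⱼ, u_k}`, `i,j,k` distinct. -/
def Y3 {n m : ℕ} (u w : Fin m → Fin n) : Finset (Finset (Fin n)) :=
  Finset.univ.filter fun s => ∃ i j k, i ≠ j ∧ i ≠ k ∧ j ≠ k ∧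
    (s = {u i, u j, w k} ∨ s = {w i, w j, u k})




section helpers
variable {α : Type*} [DecidableEq α]

lemma triple_card {x y z : α} (hxy : x ≠ y) (hxz : x ≠ z) (hyz : y ≠ z) :
    ({x, y, z} : Finset α).card = 3 := by
  rw [card_insert_of_notMem (by simp [hxy, hxz]), card_pair hyz]

lemma swap12 (x y z : α) : ({x, y, z} : Finset α) = {y, x, z} := by ext t; simp; tauto

lemma swap23 (x y z : α) : ({x, y, z} : Finset α) = {x, z, y} := by
  rw [Finset.pair_comm]

lemma rot3 (x y z : α) : ({x, y, z} : Finset α) = {y, z, x} := by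
  rw [swap12, swap23]

variable [Fintype α]

lemma card_sdiff3 {a b c : α} (hab : a ≠ b) (hac : a ≠ c) (hbc : b ≠ c) :
    (univ \ ({a, b, c} : Finset α)).card = Fintype.card α - 3 := by
  rw [card_sdiff_of_subset (subset_univ _), card_univ, triple_card hab hac hbc]

lemma card_sdiff2 {a b : α} (hab : a ≠ b) :
    (univ \ ({a, b} : Finset α)).card = Fintype.card α - 2 := by
  rw [card_sdiff_of_subset (subset_univ _), card_univ, card_pair hab]

lemma card_sdiff1 (a : α) :
    (univ \ ({a} : Finset α)).card = Fintype.card α - 1 := by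
  rw [card_sdiff_of_subset (subset_univ _), card_univ, card_singleton]

omit [Fintype α] in
lemma pair_of_subset_triple {A B C : α} {p : Finset α}
    (hp : p ⊆ {A, B, C}) (hc : p.card = 2) (hxy' : A ≠ B) :
    p = {A, B} ∨ p = {A, C} ∨ p = {B, C} := by
  obtain ⟨x, y, hxy, rfl⟩ := Finset.card_eq_two.mp hc
  have hx := hp (by simp : x ∈ ({x, y} : Finset α))
  have hy := hp (by simp : y ∈ ({x, y} : Finset α))
  simp only [mem_insert, mem_singleton] at hx hy
  rcases hx with rfl | rfl | rfl <;> rcases hy with rfl | rfl | rfl <;>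
    first
      | exact absurd rfl hxy
      | exact Or.inl rfl
      | exact Or.inr (Or.inl rfl)
      | exact Or.inr (Or.inr rfl)
      | exact Or.inl (pair_comm _ _)
      | exact Or.inr (Or.inl (pair_comm _ _))
      | exact Or.inr (Or.inr (pair_comm _ _))

end helpers




section decomp
variable {n : ℕ}

lemma inter_insert_pair {s q : Finset (Fin n)} {x : Fin n}
    (hx : x ∉ s) (hq : q ⊆ s) : s ∩ insert x q = q := by
  ext y
  simp only [mem_inter, mem_insert]
  constructor
  · rintro ⟨hys, rfl | hyq⟩
    · exact absurd hys hx
    · exact hyq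
  · intro hyq
    exact ⟨hq hyq, Or.inr hyq⟩

lemma nbc_decomp (X : Finset (Finset (Fin n))) (hX : ∀ t ∈ X, t.card = 3)
    {A B C : Fin n} (hAB : A ≠ B) (hAC : A ≠ C) (hBC : B ≠ C) :
    nbc X {A, B, C} =
      (univ.filter fun x => x ∉ ({A, B, C} : Finset (Fin n)) ∧ insert x {A, B} ∈ X).card +
      (univ.filter fun x => x ∉ ({A, B, C} : Finset (Fin n)) ∧ insert x {A, C} ∈ X).card +
      (univ.filter fun x => x ∉ ({A, B, C} : Finset (Fin n)) ∧ insert x {B, C} ∈ X).card := by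
  set s : Finset (Fin n) := {A, B, C} with hs_def
  have hsub1 : ({A, B} : Finset (Fin n)) ⊆ s := by intro y; simp [hs_def]; tauto
  have hsub2 : ({A, C} : Finset (Fin n)) ⊆ s := by intro y; simp [hs_def]; tauto
  have hsub3 : ({B, C} : Finset (Fin n)) ⊆ s := by intro y; simp [hs_def]; tauto
  set E1 := (univ.filter fun x => x ∉ s ∧ insert x {A, B} ∈ X).image
      (fun x => insert x ({A, B} : Finset (Fin n))) with hE1
  set E2 := (univ.filter fun x => x ∉ s ∧ insert x {A, C} ∈ X).image
      (fun x => insert x ({A, C} : Finset (Fin n))) with hE2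
  set E3 := (univ.filter fun x => x ∉ s ∧ insert x {B, C} ∈ X).image
      (fun x => insert x ({B, C} : Finset (Fin n))) with hE3
  have key : X.filter (fun t => (s ∩ t).card = 2) = E1 ∪ E2 ∪ E3 := by
    ext t
    simp only [mem_filter, mem_union, hE1, hE2, hE3, mem_image, mem_filter, mem_univ, true_and]
    constructor
    · rintro ⟨htX, h2⟩
      have ht3 : t.card = 3 := hX t htX
      have hgen : ∀ q : Finset (Fin n), s ∩ t = q → q ⊆ s →
          ∃ x, (x ∉ s ∧ insert x q ∈ X) ∧ insert x q = t := by
        intro q hq hqs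
        have hts : (t ∩ s).card + (t \ s).card = t.card := card_inter_add_card_sdiff t s
        have hq2 : (t ∩ s).card = 2 := by rw [inter_comm, hq, ← hq, h2]
        have h1 : (t \ s).card = 1 := by omega
        obtain ⟨x, hx⟩ := card_eq_one.mp h1
        have hxts : x ∈ t \ s := by rw [hx]; exact mem_singleton_self x
        rw [mem_sdiff] at hxts
        refine ⟨x, ⟨hxts.2, ?_⟩, ?_⟩
        · have : insert x q = t := by
            ext y
            simp only [mem_insert]
            constructor
            · rintro (rfl | hyq)
              · exact hxts.1
              · exact (mem_inter.mp (hq ▸ hyq)).2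
            · intro hyt
              by_cases hys : y ∈ s
              · exact Or.inr (hq ▸ mem_inter.mpr ⟨hys, hyt⟩)
              · have : y ∈ t \ s := mem_sdiff.mpr ⟨hyt, hys⟩
                rw [hx, mem_singleton] at this
                exact Or.inl this
          rw [this]; exact htX
        · ext y
          simp only [mem_insert]
          constructor
          · rintro (rfl | hyq)
            · exact hxts.1
            · exact (mem_inter.mp (hq ▸ hyq)).2
          · intro hyt
            by_cases hys : y ∈ s
            · exact Or.inr (hq ▸ mem_inter.mpr ⟨hys, hyt⟩)
            · have : y ∈ t \ s := mem_sdiff.mpr ⟨hyt, hys⟩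
              rw [hx, mem_singleton] at this
              exact Or.inl this
      rcases pair_of_subset_triple (inter_subset_left) h2 hAB with hp | hp | hp
      · exact Or.inl (Or.inl (hgen _ hp hsub1))
      · exact Or.inl (Or.inr (hgen _ hp hsub2))
      · exact Or.inr (hgen _ hp hsub3)
    · have hgen : ∀ q : Finset (Fin n), q ⊆ s → q.card = 2 →
          (∃ x, (x ∉ s ∧ insert x q ∈ X) ∧ insert x q = t) → t ∈ X ∧ (s ∩ t).card = 2 := by
        rintro q hqs hq2 ⟨x, ⟨hxs, hxX⟩, rfl⟩
        refine ⟨hxX, ?_⟩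
        rw [inter_insert_pair hxs hqs, hq2]
      rintro ((h | h) | h)
      · exact hgen _ hsub1 (card_pair hAB) h
      · exact hgen _ hsub2 (card_pair hAC) h
      · exact hgen _ hsub3 (card_pair hBC) h
  have hinj : ∀ q : Finset (Fin n), q ⊆ s →
      Set.InjOn (fun x => insert x q) ↑(univ.filter fun x => x ∉ s ∧ insert x q ∈ X) := by
    intro q hqs x hx y hy hxy
    simp only [coe_filter, Set.mem_setOf_eq, mem_univ, true_and] at hx hy
    have : x ∈ insert y q := by
      have h' : insert x q = insert y q := hxy
      rw [← h']; exact mem_insert_self x q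
    rcases mem_insert.mp this with h | h
    · exact h
    · exact absurd (hqs h) hx.1
  have hd12 : Disjoint E1 E2 := by
    rw [disjoint_left]
    intro t ht1 ht2
    simp only [hE1, hE2, mem_image, mem_filter, mem_univ, true_and] at ht1 ht2
    obtain ⟨x, ⟨hxs, -⟩, rfl⟩ := ht1
    obtain ⟨y, ⟨hys, -⟩, h⟩ := ht2
    have hC : C ∈ insert y ({A, C} : Finset (Fin n)) := by simp
    rw [h] at hC
    simp only [mem_insert, mem_singleton] at hC
    rcases hC with h' | h' | h'
    · exact hxs (h' ▸ (by simp [hs_def]))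
    · exact hAC h'.symm
    · exact hBC h'.symm
  have hd3 : Disjoint (E1 ∪ E2) E3 := by
    rw [disjoint_left]
    intro t ht12 ht3
    simp only [hE3, mem_image, mem_filter, mem_univ, true_and] at ht3
    obtain ⟨y, ⟨hys, -⟩, rfl⟩ := ht3
    have hA : A ∉ insert y ({B, C} : Finset (Fin n)) := by
      simp only [mem_insert, mem_singleton]
      rintro (rfl | rfl | rfl)
      · exact hys (by simp [hs_def])
      · exact hAB rfl
      · exact hAC rfl
    rcases mem_union.mp ht12 with h | h
    · simp only [hE1, mem_image] at h
      obtain ⟨x, -, h⟩ := h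
      exact hA (h ▸ (by simp))
    · simp only [hE2, mem_image] at h
      obtain ⟨x, -, h⟩ := h
      exact hA (h ▸ (by simp))
  rw [nbc, key, card_union_of_disjoint hd3, card_union_of_disjoint hd12,
    card_image_of_injOn (hinj _ hsub1), card_image_of_injOn (hinj _ hsub2),
    card_image_of_injOn (hinj _ hsub3)]




section main
variable {m : ℕ} {u w : Fin m → Fin (2 * m)}

lemma mem_Y1 {s : Finset (Fin (2 * m))} : s ∈ Y1 u w ↔ s.card = 3 ∧
    ((∀ x ∈ s, ∃ i, u i = x) ∨ (∀ x ∈ s, ∃ i, w i = x)) := by simp [Y1]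

lemma mem_Y2 {s : Finset (Fin (2 * m))} : s ∈ Y2 u w ↔ ∃ i j, i ≠ j ∧
    (s = {u i, u j, w i} ∨ s = {w i, w j, u i}) := by simp [Y2]

lemma mem_Y3 {s : Finset (Fin (2 * m))} : s ∈ Y3 u w ↔ ∃ i j k, i ≠ j ∧ i ≠ k ∧ j ≠ k ∧
    (s = {u i, u j, w k} ∨ s = {w i, w j, u k}) := by simp [Y3]

lemma Y1_comm : Y1 u w = Y1 w u := by
  unfold Y1; ext s; simp only [mem_filter]; tauto

lemma Y2_comm : Y2 u w = Y2 w u := by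
  unfold Y2; ext s; simp only [mem_filter, mem_univ, true_and]
  constructor <;> (rintro ⟨i, j, hij, h | h⟩ <;> exact ⟨i, j, hij, by tauto⟩)

lemma Y3_comm : Y3 u w = Y3 w u := by
  unfold Y3; ext s; simp only [mem_filter, mem_univ, true_and]
  constructor <;> (rintro ⟨i, j, k, h1, h2, h3, h | h⟩ <;> exact ⟨i, j, k, h1, h2, h3, by tauto⟩)

variable (hu : Function.Injective u) (hw : Function.Injective w)
  (huw : ∀ i j, u i ≠ w j)

include huw in
lemma huw' : ∀ i j, w i ≠ u j := fun i j h => huw j i h.symm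

include hu hw huw

lemma cover (x : Fin (2 * m)) : (∃ i, u i = x) ∨ (∃ i, w i = x) := by
  have hdisj : Disjoint (univ.image u) (univ.image w) := by
    rw [Finset.disjoint_left]
    rintro a ha hb
    simp only [mem_image, mem_univ, true_and] at ha hb
    obtain ⟨i, rfl⟩ := ha
    obtain ⟨j, hj⟩ := hb
    exact huw i j hj.symm
  have hcup : (univ.image u ∪ univ.image w) = univ := by
    apply Finset.eq_univ_of_card
    rw [card_union_of_disjoint hdisj, card_image_of_injective _ hu,
      card_image_of_injective _ hw, card_univ, Fintype.card_fin, Fintype.card_fin]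
    omega
  have hx : x ∈ univ.image u ∪ univ.image w := hcup ▸ mem_univ x
  simpa using hx

lemma filter_split (P : Fin (2 * m) → Prop) [DecidablePred P] :
    (univ.filter P).card
      = (univ.filter fun i => P (u i)).card + (univ.filter fun i => P (w i)).card := by
  have h : univ.filter P
      = ((univ.filter fun i => P (u i)).image u) ∪ ((univ.filter fun i => P (w i)).image w) := by
    ext x
    simp only [mem_filter, mem_univ, true_and, mem_union, mem_image]
    constructor
    · intro hx
      rcases cover hu hw huw x with ⟨i, rfl⟩ | ⟨i, rfl⟩
      · exact Or.inl ⟨i, hx, rfl⟩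
      · exact Or.inr ⟨i, hx, rfl⟩
    · rintro (⟨i, hi, rfl⟩ | ⟨i, hi, rfl⟩) <;> exact hi
  have hd : Disjoint ((univ.filter fun i => P (u i)).image u)
      ((univ.filter fun i => P (w i)).image w) := by
    rw [Finset.disjoint_left]
    rintro x hx hx'
    simp only [mem_image, mem_filter, mem_univ, true_and] at hx hx'
    obtain ⟨i, -, rfl⟩ := hx
    obtain ⟨j, -, hj⟩ := hx'
    exact huw i j hj.symm
  rw [h, card_union_of_disjoint hd, card_image_of_injective _ hu, card_image_of_injective _ hw]

end main

section classify
variable {m : ℕ} {u w : Fin m → Fin (2 * m)}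
variable (hu : Function.Injective u) (hw : Function.Injective w)
  (huw : ∀ i j, u i ≠ w j)

include hu hw huw

lemma mem_Y1_uuu {a b c : Fin m} (hab : a ≠ b) (hac : a ≠ c) (hbc : b ≠ c) :
    ({u a, u b, u c} : Finset (Fin (2 * m))) ∈ Y1 u w := by
  rw [mem_Y1]
  refine ⟨triple_card (fun h => hab (hu h)) (fun h => hac (hu h)) (fun h => hbc (hu h)),
    Or.inl ?_⟩
  intro x hx
  simp only [mem_insert, mem_singleton] at hx
  rcases hx with rfl | rfl | rfl
  exacts [⟨a, rfl⟩, ⟨b, rfl⟩, ⟨c, rfl⟩]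

lemma notMem_Y2_uuu (a b c : Fin m) : ({u a, u b, u c} : Finset (Fin (2 * m))) ∉ Y2 u w := by
  rw [mem_Y2]
  rintro ⟨i, j, hij, h | h⟩
  · have h1 : w i ∈ ({u a, u b, u c} : Finset (Fin (2 * m))) := by rw [h]; simp
    simp only [mem_insert, mem_singleton] at h1
    rcases h1 with h1 | h1 | h1 <;> exact huw _ _ h1.symm
  · have h1 : w i ∈ ({u a, u b, u c} : Finset (Fin (2 * m))) := by rw [h]; simp
    simp only [mem_insert, mem_singleton] at h1
    rcases h1 with h1 | h1 | h1 <;> exact huw _ _ h1.symm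

lemma notMem_Y3_uuu (a b c : Fin m) : ({u a, u b, u c} : Finset (Fin (2 * m))) ∉ Y3 u w := by
  rw [mem_Y3]
  rintro ⟨i, j, k, hij, hik, hjk, h | h⟩
  · have h1 : w k ∈ ({u a, u b, u c} : Finset (Fin (2 * m))) := by rw [h]; simp
    simp only [mem_insert, mem_singleton] at h1
    rcases h1 with h1 | h1 | h1 <;> exact huw _ _ h1.symm
  · have h1 : w i ∈ ({u a, u b, u c} : Finset (Fin (2 * m))) := by rw [h]; simp
    simp only [mem_insert, mem_singleton] at h1
    rcases h1 with h1 | h1 | h1 <;> exact huw _ _ h1.symm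

lemma notMem_Y1_uuw (a b c : Fin m) : ({u a, u b, w c} : Finset (Fin (2 * m))) ∉ Y1 u w := by
  rw [mem_Y1]
  rintro ⟨-, h | h⟩
  · obtain ⟨i, hi⟩ := h (w c) (by simp)
    exact huw i c hi
  · obtain ⟨i, hi⟩ := h (u a) (by simp)
    exact huw a i hi.symm

lemma mem_Y2_uuw_iff {a b : Fin m} (c : Fin m) (hab : a ≠ b) :
    ({u a, u b, w c} : Finset (Fin (2 * m))) ∈ Y2 u w ↔ c = a ∨ c = b := by
  rw [mem_Y2]
  constructor
  · rintro ⟨i, j, hij, h | h⟩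
    · have h1 : w i ∈ ({u a, u b, w c} : Finset (Fin (2 * m))) := by rw [h]; simp
      simp only [mem_insert, mem_singleton, hw.eq_iff] at h1
      rcases h1 with h1 | h1 | rfl
      · exact absurd h1.symm (huw a i)
      · exact absurd h1.symm (huw b i)
      have h2 : u i ∈ ({u a, u b, w i} : Finset (Fin (2 * m))) := by rw [h]; simp
      simp only [mem_insert, mem_singleton, hu.eq_iff] at h2
      rcases h2 with rfl | rfl | h2
      · exact Or.inl rfl
      · exact Or.inr rfl
      · exact absurd h2 (huw i i)
    · have h1 : w i ∈ ({u a, u b, w c} : Finset (Fin (2 * m))) := by rw [h]; simp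
      have h2 : w j ∈ ({u a, u b, w c} : Finset (Fin (2 * m))) := by rw [h]; simp
      simp only [mem_insert, mem_singleton, hw.eq_iff] at h1 h2
      rcases h1 with h1 | h1 | rfl
      · exact absurd h1.symm (huw a i)
      · exact absurd h1.symm (huw b i)
      rcases h2 with h2 | h2 | h2
      · exact absurd h2.symm (huw a j)
      · exact absurd h2.symm (huw b j)
      · exact absurd h2.symm hij
  · rintro (rfl | rfl)
    · exact ⟨c, b, hab, Or.inl rfl⟩
    · exact ⟨c, a, hab.symm, Or.inl (swap12 _ _ _)⟩

lemma mem_Y3_uuw_iff {a b : Fin m} (c : Fin m) (hab : a ≠ b) :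
    ({u a, u b, w c} : Finset (Fin (2 * m))) ∈ Y3 u w ↔ c ≠ a ∧ c ≠ b := by
  rw [mem_Y3]
  constructor
  · rintro ⟨i, j, k, hij, hik, hjk, h | h⟩
    · have h1 : w k ∈ ({u a, u b, w c} : Finset (Fin (2 * m))) := by rw [h]; simp
      simp only [mem_insert, mem_singleton, hw.eq_iff] at h1
      rcases h1 with h1 | h1 | rfl
      · exact absurd h1.symm (huw a k)
      · exact absurd h1.symm (huw b k)
      have h2 : u i ∈ ({u a, u b, w k} : Finset (Fin (2 * m))) := by rw [h]; simp
      have h3 : u j ∈ ({u a, u b, w k} : Finset (Fin (2 * m))) := by rw [h]; simp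
      simp only [mem_insert, mem_singleton, hu.eq_iff] at h2 h3
      rcases h2 with rfl | rfl | h2
      · rcases h3 with rfl | rfl | h3
        · exact absurd rfl hij
        · exact ⟨fun h' => hik h'.symm, fun h' => hjk h'.symm⟩
        · exact absurd h3 (huw j k)
      · rcases h3 with rfl | rfl | h3
        · exact ⟨fun h' => hjk h'.symm, fun h' => hik h'.symm⟩
        · exact absurd rfl hij
        · exact absurd h3 (huw j k)
      · exact absurd h2 (huw i k)
    · have h1 : w i ∈ ({u a, u b, w c} : Finset (Fin (2 * m))) := by rw [h]; simp
      have h2 : w j ∈ ({u a, u b, w c} : Finset (Fin (2 * m))) := by rw [h]; simp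
      simp only [mem_insert, mem_singleton, hw.eq_iff] at h1 h2
      rcases h1 with h1 | h1 | rfl
      · exact absurd h1.symm (huw a i)
      · exact absurd h1.symm (huw b i)
      rcases h2 with h2 | h2 | h2
      · exact absurd h2.symm (huw a j)
      · exact absurd h2.symm (huw b j)
      · exact absurd h2.symm hij
  · rintro ⟨hca, hcb⟩
    exact ⟨a, b, c, hab, fun h => hca h.symm, fun h => hcb h.symm, Or.inl rfl⟩

lemma card_of_mem_Y2 {t : Finset (Fin (2 * m))} (ht : t ∈ Y2 u w) : t.card = 3 := by
  rw [mem_Y2] at ht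
  obtain ⟨i, j, hij, rfl | rfl⟩ := ht
  · exact triple_card (fun h => hij (hu h)) (huw i i) (huw j i)
  · exact triple_card (fun h => hij (hw h)) (fun h => huw i i h.symm) (fun h => huw i j h.symm)

lemma card_of_mem_Y3 {t : Finset (Fin (2 * m))} (ht : t ∈ Y3 u w) : t.card = 3 := by
  rw [mem_Y3] at ht
  obtain ⟨i, j, k, hij, hik, hjk, rfl | rfl⟩ := ht
  · exact triple_card (fun h => hij (hu h)) (huw i k) (huw j k)
  · exact triple_card (fun h => hij (hw h)) (fun h => huw k i h.symm) (fun h => huw k j h.symm)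

lemma card_of_mem_Y1 {t : Finset (Fin (2 * m))} (ht : t ∈ Y1 u w) : t.card = 3 :=
  (mem_Y1.mp ht).1

end classify

section counts
variable {m : ℕ} {u w : Fin m → Fin (2 * m)}
variable (hu : Function.Injective u) (hw : Function.Injective w)
  (huw : ∀ i j, u i ≠ w j)

include hu hw huw

lemma R1P1Y1 (a b c : Fin m) (hab : a ≠ b) (hac : a ≠ c) (hbc : b ≠ c) :
    (univ.filter fun x => x ∉ ({u a, u b, u c} : Finset (Fin (2 * m))) ∧
      insert x {u a, u b} ∈ Y1 u w).card = m - 3 := by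
  rw [filter_split hu hw huw]
  have h1 : (univ.filter fun i => u i ∉ ({u a, u b, u c} : Finset (Fin (2 * m))) ∧
      insert (u i) {u a, u b} ∈ Y1 u w) = univ \ ({a, b, c} : Finset (Fin m)) := by
    ext i
    simp only [mem_filter, mem_univ, true_and, mem_sdiff, mem_insert, mem_singleton,
      hu.eq_iff, not_or]
    constructor
    · rintro ⟨h1, -⟩; exact h1
    · rintro ⟨hia, hib, hic⟩
      exact ⟨⟨hia, hib, hic⟩, mem_Y1_uuu hu hw huw hia hib hab⟩
  have h2 : (univ.filter fun i => w i ∉ ({u a, u b, u c} : Finset (Fin (2 * m))) ∧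
      insert (w i) {u a, u b} ∈ Y1 u w) = ∅ := by
    rw [filter_eq_empty_iff]
    rintro i - ⟨-, h⟩
    rw [rot3] at h
    exact notMem_Y1_uuw hu hw huw a b i h
  rw [h1, h2, card_sdiff3 hab hac hbc, card_empty, Fintype.card_fin]
  omega

lemma R1P1Y2 (a b c : Fin m) (hab : a ≠ b) (hac : a ≠ c) (hbc : b ≠ c) :
    (univ.filter fun x => x ∉ ({u a, u b, u c} : Finset (Fin (2 * m))) ∧
      insert x {u a, u b} ∈ Y2 u w).card = 2 := by
  rw [filter_split hu hw huw]
  have h1 : (univ.filter fun i => u i ∉ ({u a, u b, u c} : Finset (Fin (2 * m))) ∧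
      insert (u i) {u a, u b} ∈ Y2 u w) = ∅ := by
    rw [filter_eq_empty_iff]
    rintro i - ⟨-, h⟩
    exact notMem_Y2_uuu hu hw huw i a b h
  have h2 : (univ.filter fun i => w i ∉ ({u a, u b, u c} : Finset (Fin (2 * m))) ∧
      insert (w i) {u a, u b} ∈ Y2 u w) = ({a, b} : Finset (Fin m)) := by
    ext i
    simp only [mem_filter, mem_univ, true_and, mem_insert, mem_singleton]
    constructor
    · rintro ⟨-, h⟩
      rw [rot3] at h
      exact (mem_Y2_uuw_iff hu hw huw i hab).mp h
    · intro h
      constructor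
      · rintro (h' | h' | h') <;> exact huw _ _ h'.symm
      · rw [rot3]
        exact (mem_Y2_uuw_iff hu hw huw i hab).mpr h
  rw [h1, h2, card_empty, card_pair hab]

lemma R1P1Y3 (a b c : Fin m) (hab : a ≠ b) (hac : a ≠ c) (hbc : b ≠ c) :
    (univ.filter fun x => x ∉ ({u a, u b, u c} : Finset (Fin (2 * m))) ∧
      insert x {u a, u b} ∈ Y3 u w).card = m - 2 := by
  rw [filter_split hu hw huw]
  have h1 : (univ.filter fun i => u i ∉ ({u a, u b, u c} : Finset (Fin (2 * m))) ∧
      insert (u i) {u a, u b} ∈ Y3 u w) = ∅ := by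
    rw [filter_eq_empty_iff]
    rintro i - ⟨-, h⟩
    exact notMem_Y3_uuu hu hw huw i a b h
  have h2 : (univ.filter fun i => w i ∉ ({u a, u b, u c} : Finset (Fin (2 * m))) ∧
      insert (w i) {u a, u b} ∈ Y3 u w) = univ \ ({a, b} : Finset (Fin m)) := by
    ext i
    simp only [mem_filter, mem_univ, true_and, mem_sdiff, mem_insert, mem_singleton, not_or]
    constructor
    · rintro ⟨-, h⟩
      rw [rot3] at h
      exact (mem_Y3_uuw_iff hu hw huw i hab).mp h
    · rintro ⟨hia, hib⟩
      refine ⟨⟨huw' huw i a, huw' huw i b, huw' huw i c⟩, ?_⟩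
      rw [rot3]
      exact (mem_Y3_uuw_iff hu hw huw i hab).mpr ⟨hia, hib⟩
  rw [h1, h2, card_empty, card_sdiff2 hab, Fintype.card_fin]
  omega

lemma row1 (a b c : Fin m) (hab : a ≠ b) (hac : a ≠ c) (hbc : b ≠ c) :
    nbc (Y1 u w) {u a, u b, u c} = 3 * m - 9 ∧
    nbc (Y2 u w) {u a, u b, u c} = 6 ∧
    nbc (Y3 u w) {u a, u b, u c} = 3 * m - 6 := by
  have hAB : u a ≠ u b := fun h => hab (hu h)
  have hAC : u a ≠ u c := fun h => hac (hu h)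
  have hBC : u b ≠ u c := fun h => hbc (hu h)
  have hs2 : ({u a, u b, u c} : Finset (Fin (2 * m))) = {u a, u c, u b} := swap23 _ _ _
  have hs3 : ({u a, u b, u c} : Finset (Fin (2 * m))) = {u b, u c, u a} := rot3 _ _ _
  refine ⟨?_, ?_, ?_⟩
  · rw [nbc_decomp (Y1 u w) (fun t ht => card_of_mem_Y1 hu hw huw ht) hAB hAC hBC]
    have e1 := R1P1Y1 hu hw huw a b c hab hac hbc
    have e2 : (univ.filter fun x => x ∉ ({u a, u b, u c} : Finset (Fin (2 * m))) ∧
        insert x {u a, u c} ∈ Y1 u w).card = m - 3 := by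
      rw [hs2]; exact R1P1Y1 hu hw huw a c b hac hab hbc.symm
    have e3 : (univ.filter fun x => x ∉ ({u a, u b, u c} : Finset (Fin (2 * m))) ∧
        insert x {u b, u c} ∈ Y1 u w).card = m - 3 := by
      rw [hs3]; exact R1P1Y1 hu hw huw b c a hbc hab.symm hac.symm
    rw [e1, e2, e3]; omega
  · rw [nbc_decomp (Y2 u w) (fun t ht => card_of_mem_Y2 hu hw huw ht) hAB hAC hBC]
    have e1 := R1P1Y2 hu hw huw a b c hab hac hbc
    have e2 : (univ.filter fun x => x ∉ ({u a, u b, u c} : Finset (Fin (2 * m))) ∧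
        insert x {u a, u c} ∈ Y2 u w).card = 2 := by
      rw [hs2]; exact R1P1Y2 hu hw huw a c b hac hab hbc.symm
    have e3 : (univ.filter fun x => x ∉ ({u a, u b, u c} : Finset (Fin (2 * m))) ∧
        insert x {u b, u c} ∈ Y2 u w).card = 2 := by
      rw [hs3]; exact R1P1Y2 hu hw huw b c a hbc hab.symm hac.symm
    rw [e1, e2, e3]
  · rw [nbc_decomp (Y3 u w) (fun t ht => card_of_mem_Y3 hu hw huw ht) hAB hAC hBC]
    have e1 := R1P1Y3 hu hw huw a b c hab hac hbc
    have e2 : (univ.filter fun x => x ∉ ({u a, u b, u c} : Finset (Fin (2 * m))) ∧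
        insert x {u a, u c} ∈ Y3 u w).card = m - 2 := by
      rw [hs2]; exact R1P1Y3 hu hw huw a c b hac hab hbc.symm
    have e3 : (univ.filter fun x => x ∉ ({u a, u b, u c} : Finset (Fin (2 * m))) ∧
        insert x {u b, u c} ∈ Y3 u w).card = m - 2 := by
      rw [hs3]; exact R1P1Y3 hu hw huw b c a hbc hab.symm hac.symm
    rw [e1, e2, e3]; omega

end counts

section counts2
variable {m : ℕ} {u w : Fin m → Fin (2 * m)}
variable (hu : Function.Injective u) (hw : Function.Injective w)
  (huw : ∀ i j, u i ≠ w j)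

include hu hw huw

-- s = {u a, u b, w a}, pair {u a, u b}
lemma R2P1Y1 (a b : Fin m) (hab : a ≠ b) :
    (univ.filter fun x => x ∉ ({u a, u b, w a} : Finset (Fin (2 * m))) ∧
      insert x {u a, u b} ∈ Y1 u w).card = m - 2 := by
  rw [filter_split hu hw huw]
  have h1 : (univ.filter fun i => u i ∉ ({u a, u b, w a} : Finset (Fin (2 * m))) ∧
      insert (u i) {u a, u b} ∈ Y1 u w) = univ \ ({a, b} : Finset (Fin m)) := by
    ext i
    simp only [mem_filter, mem_univ, true_and, mem_sdiff, mem_insert, mem_singleton,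
      hu.eq_iff, huw, not_or]
    constructor
    · rintro ⟨⟨hia, hib, -⟩, -⟩; exact ⟨hia, hib⟩
    · rintro ⟨hia, hib⟩
      exact ⟨⟨hia, hib, not_false⟩, mem_Y1_uuu hu hw huw hia hib hab⟩
  have h2 : (univ.filter fun i => w i ∉ ({u a, u b, w a} : Finset (Fin (2 * m))) ∧
      insert (w i) {u a, u b} ∈ Y1 u w) = ∅ := by
    rw [filter_eq_empty_iff]
    rintro i - ⟨-, h⟩
    rw [rot3] at h
    exact notMem_Y1_uuw hu hw huw a b i h
  rw [h1, h2, card_sdiff2 hab, card_empty, Fintype.card_fin]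
  omega

lemma R2P1Y2 (a b : Fin m) (hab : a ≠ b) :
    (univ.filter fun x => x ∉ ({u a, u b, w a} : Finset (Fin (2 * m))) ∧
      insert x {u a, u b} ∈ Y2 u w).card = 1 := by
  rw [filter_split hu hw huw]
  have h1 : (univ.filter fun i => u i ∉ ({u a, u b, w a} : Finset (Fin (2 * m))) ∧
      insert (u i) {u a, u b} ∈ Y2 u w) = ∅ := by
    rw [filter_eq_empty_iff]
    rintro i - ⟨-, h⟩
    exact notMem_Y2_uuu hu hw huw i a b h
  have h2 : (univ.filter fun i => w i ∉ ({u a, u b, w a} : Finset (Fin (2 * m))) ∧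
      insert (w i) {u a, u b} ∈ Y2 u w) = ({b} : Finset (Fin m)) := by
    ext i
    simp only [mem_filter, mem_univ, true_and, mem_insert, mem_singleton,
      hw.eq_iff, huw' huw, not_or]
    constructor
    · rintro ⟨⟨-, -, hia⟩, h⟩
      rw [rot3] at h
      rcases (mem_Y2_uuw_iff hu hw huw i hab).mp h with h' | h'
      · exact absurd h' hia
      · exact h'
    · intro h'
      subst h'
      refine ⟨⟨not_false, not_false, hab.symm⟩, ?_⟩
      rw [rot3]
      exact (mem_Y2_uuw_iff (a := a) (b := i) hu hw huw i hab).mpr (Or.inr rfl)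
  rw [h1, h2, card_empty, card_singleton]

lemma R2P1Y3 (a b : Fin m) (hab : a ≠ b) :
    (univ.filter fun x => x ∉ ({u a, u b, w a} : Finset (Fin (2 * m))) ∧
      insert x {u a, u b} ∈ Y3 u w).card = m - 2 := by
  rw [filter_split hu hw huw]
  have h1 : (univ.filter fun i => u i ∉ ({u a, u b, w a} : Finset (Fin (2 * m))) ∧
      insert (u i) {u a, u b} ∈ Y3 u w) = ∅ := by
    rw [filter_eq_empty_iff]
    rintro i - ⟨-, h⟩
    exact notMem_Y3_uuu hu hw huw i a b h
  have h2 : (univ.filter fun i => w i ∉ ({u a, u b, w a} : Finset (Fin (2 * m))) ∧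
      insert (w i) {u a, u b} ∈ Y3 u w) = univ \ ({a, b} : Finset (Fin m)) := by
    ext i
    simp only [mem_filter, mem_univ, true_and, mem_sdiff, mem_insert, mem_singleton,
      hw.eq_iff, huw' huw, not_or]
    constructor
    · rintro ⟨-, h⟩
      rw [rot3] at h
      exact (mem_Y3_uuw_iff hu hw huw i hab).mp h
    · rintro ⟨hia, hib⟩
      refine ⟨⟨not_false, not_false, hia⟩, ?_⟩
      rw [rot3]
      exact (mem_Y3_uuw_iff hu hw huw i hab).mpr ⟨hia, hib⟩
  rw [h1, h2, card_empty, card_sdiff2 hab, Fintype.card_fin]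
  omega

-- s = {u a, u b, w a}, pair {u a, w a}
lemma R2P2Y1 (a b : Fin m) (hab : a ≠ b) :
    (univ.filter fun x => x ∉ ({u a, u b, w a} : Finset (Fin (2 * m))) ∧
      insert x {u a, w a} ∈ Y1 u w).card = 0 := by
  rw [filter_split hu hw huw]
  have h1 : (univ.filter fun i => u i ∉ ({u a, u b, w a} : Finset (Fin (2 * m))) ∧
      insert (u i) {u a, w a} ∈ Y1 u w) = ∅ := by
    rw [filter_eq_empty_iff]
    rintro i - ⟨-, h⟩
    exact notMem_Y1_uuw hu hw huw i a a h
  have h2 : (univ.filter fun i => w i ∉ ({u a, u b, w a} : Finset (Fin (2 * m))) ∧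
      insert (w i) {u a, w a} ∈ Y1 u w) = ∅ := by
    rw [filter_eq_empty_iff]
    rintro i - ⟨-, h⟩
    rw [swap23, Y1_comm] at h
    exact notMem_Y1_uuw hw hu (huw' huw) i a a h
  rw [h1, h2, card_empty]

lemma R2P2Y2 (a b : Fin m) (hab : a ≠ b) :
    (univ.filter fun x => x ∉ ({u a, u b, w a} : Finset (Fin (2 * m))) ∧
      insert x {u a, w a} ∈ Y2 u w).card = (m - 2) + (m - 1) := by
  rw [filter_split hu hw huw]
  have h1 : (univ.filter fun i => u i ∉ ({u a, u b, w a} : Finset (Fin (2 * m))) ∧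
      insert (u i) {u a, w a} ∈ Y2 u w) = univ \ ({a, b} : Finset (Fin m)) := by
    ext i
    simp only [mem_filter, mem_univ, true_and, mem_sdiff, mem_insert, mem_singleton,
      hu.eq_iff, huw, not_or]
    constructor
    · rintro ⟨⟨hia, hib, -⟩, -⟩; exact ⟨hia, hib⟩
    · rintro ⟨hia, hib⟩
      refine ⟨⟨hia, hib, not_false⟩, ?_⟩
      exact (mem_Y2_uuw_iff (a := i) (b := a) hu hw huw a hia).mpr (Or.inr rfl)
  have h2 : (univ.filter fun i => w i ∉ ({u a, u b, w a} : Finset (Fin (2 * m))) ∧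
      insert (w i) {u a, w a} ∈ Y2 u w) = univ \ ({a} : Finset (Fin m)) := by
    ext i
    simp only [mem_filter, mem_univ, true_and, mem_sdiff, mem_insert, mem_singleton,
      hw.eq_iff, huw' huw, not_or]
    constructor
    · rintro ⟨⟨-, -, hia⟩, -⟩; exact hia
    · intro hia
      refine ⟨⟨not_false, not_false, hia⟩, ?_⟩
      rw [swap23, Y2_comm]
      exact (mem_Y2_uuw_iff (a := i) (b := a) hw hu (huw' huw) a hia).mpr (Or.inr rfl)
  rw [h1, h2, card_sdiff2 hab, card_sdiff1, Fintype.card_fin]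

lemma R2P2Y3 (a b : Fin m) (hab : a ≠ b) :
    (univ.filter fun x => x ∉ ({u a, u b, w a} : Finset (Fin (2 * m))) ∧
      insert x {u a, w a} ∈ Y3 u w).card = 0 := by
  rw [filter_split hu hw huw]
  have h1 : (univ.filter fun i => u i ∉ ({u a, u b, w a} : Finset (Fin (2 * m))) ∧
      insert (u i) {u a, w a} ∈ Y3 u w) = ∅ := by
    rw [filter_eq_empty_iff]
    rintro i - ⟨hns, h⟩
    have hia : i ≠ a := by
      intro h'; exact hns (by simp [h'])
    exact ((mem_Y3_uuw_iff hu hw huw a hia).mp h).2 rfl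
  have h2 : (univ.filter fun i => w i ∉ ({u a, u b, w a} : Finset (Fin (2 * m))) ∧
      insert (w i) {u a, w a} ∈ Y3 u w) = ∅ := by
    rw [filter_eq_empty_iff]
    rintro i - ⟨hns, h⟩
    have hia : i ≠ a := by
      intro h'; exact hns (by simp [h'])
    rw [swap23, Y3_comm] at h
    exact ((mem_Y3_uuw_iff hw hu (huw' huw) a hia).mp h).2 rfl
  rw [h1, h2, card_empty]

-- s = {u a, u b, w a}, pair {u b, w a}
lemma R2P3Y1 (a b : Fin m) (hab : a ≠ b) :
    (univ.filter fun x => x ∉ ({u a, u b, w a} : Finset (Fin (2 * m))) ∧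
      insert x {u b, w a} ∈ Y1 u w).card = 0 := by
  rw [filter_split hu hw huw]
  have h1 : (univ.filter fun i => u i ∉ ({u a, u b, w a} : Finset (Fin (2 * m))) ∧
      insert (u i) {u b, w a} ∈ Y1 u w) = ∅ := by
    rw [filter_eq_empty_iff]
    rintro i - ⟨-, h⟩
    exact notMem_Y1_uuw hu hw huw i b a h
  have h2 : (univ.filter fun i => w i ∉ ({u a, u b, w a} : Finset (Fin (2 * m))) ∧
      insert (w i) {u b, w a} ∈ Y1 u w) = ∅ := by
    rw [filter_eq_empty_iff]
    rintro i - ⟨-, h⟩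
    rw [swap23, Y1_comm] at h
    exact notMem_Y1_uuw hw hu (huw' huw) i a b h
  rw [h1, h2, card_empty]

lemma R2P3Y2 (a b : Fin m) (hab : a ≠ b) :
    (univ.filter fun x => x ∉ ({u a, u b, w a} : Finset (Fin (2 * m))) ∧
      insert x {u b, w a} ∈ Y2 u w).card = 1 := by
  rw [filter_split hu hw huw]
  have h1 : (univ.filter fun i => u i ∉ ({u a, u b, w a} : Finset (Fin (2 * m))) ∧
      insert (u i) {u b, w a} ∈ Y2 u w) = ∅ := by
    rw [filter_eq_empty_iff]
    rintro i - ⟨hns, h⟩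
    have hia : i ≠ a := by
      intro h'; exact hns (by simp [h'])
    have hib : i ≠ b := by
      intro h'; exact hns (by simp [h'])
    rcases (mem_Y2_uuw_iff hu hw huw a hib).mp h with h' | h'
    · exact hia h'.symm
    · exact hab h'
  have h2 : (univ.filter fun i => w i ∉ ({u a, u b, w a} : Finset (Fin (2 * m))) ∧
      insert (w i) {u b, w a} ∈ Y2 u w) = ({b} : Finset (Fin m)) := by
    ext i
    simp only [mem_filter, mem_univ, true_and, mem_insert, mem_singleton,
      hw.eq_iff, huw' huw, not_or]
    constructor
    · rintro ⟨⟨-, -, hia⟩, h⟩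
      rw [swap23, Y2_comm] at h
      rcases (mem_Y2_uuw_iff hw hu (huw' huw) b hia).mp h with h' | h'
      · exact h'.symm
      · exact absurd h'.symm hab
    · intro h'
      subst h'
      refine ⟨⟨not_false, not_false, hab.symm⟩, ?_⟩
      rw [swap23, Y2_comm]
      exact (mem_Y2_uuw_iff (a := i) (b := a) hw hu (huw' huw) i hab.symm).mpr (Or.inl rfl)
  rw [h1, h2, card_empty, card_singleton]

lemma R2P3Y3 (a b : Fin m) (hab : a ≠ b) :
    (univ.filter fun x => x ∉ ({u a, u b, w a} : Finset (Fin (2 * m))) ∧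
      insert x {u b, w a} ∈ Y3 u w).card = (m - 2) + (m - 2) := by
  rw [filter_split hu hw huw]
  have h1 : (univ.filter fun i => u i ∉ ({u a, u b, w a} : Finset (Fin (2 * m))) ∧
      insert (u i) {u b, w a} ∈ Y3 u w) = univ \ ({a, b} : Finset (Fin m)) := by
    ext i
    simp only [mem_filter, mem_univ, true_and, mem_sdiff, mem_insert, mem_singleton,
      hu.eq_iff, huw, not_or]
    constructor
    · rintro ⟨⟨hia, hib, -⟩, -⟩; exact ⟨hia, hib⟩
    · rintro ⟨hia, hib⟩
      refine ⟨⟨hia, hib, not_false⟩, ?_⟩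
      exact (mem_Y3_uuw_iff (a := i) (b := b) hu hw huw a hib).mpr ⟨fun h => hia h.symm, hab⟩
  have h2 : (univ.filter fun i => w i ∉ ({u a, u b, w a} : Finset (Fin (2 * m))) ∧
      insert (w i) {u b, w a} ∈ Y3 u w) = univ \ ({a, b} : Finset (Fin m)) := by
    ext i
    simp only [mem_filter, mem_univ, true_and, mem_sdiff, mem_insert, mem_singleton,
      hw.eq_iff, huw' huw, not_or]
    constructor
    · rintro ⟨⟨-, -, hia⟩, h⟩
      rw [swap23, Y3_comm] at h
      have := (mem_Y3_uuw_iff hw hu (huw' huw) b hia).mp h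
      exact ⟨hia, fun h' => this.1 h'.symm⟩
    · rintro ⟨hia, hib⟩
      refine ⟨⟨not_false, not_false, hia⟩, ?_⟩
      rw [swap23, Y3_comm]
      exact (mem_Y3_uuw_iff (a := i) (b := a) hw hu (huw' huw) b hia).mpr ⟨fun h => hib h.symm, hab.symm⟩
  rw [h1, h2, card_sdiff2 hab, Fintype.card_fin]

lemma row2 (a b : Fin m) (hab : a ≠ b) :
    nbc (Y1 u w) {u a, u b, w a} = m - 2 ∧
    nbc (Y2 u w) {u a, u b, w a} = 2 * m - 1 ∧
    nbc (Y3 u w) {u a, u b, w a} = 3 * m - 6 := by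
  have hAB : u a ≠ u b := fun h => hab (hu h)
  have hAC : u a ≠ w a := huw a a
  have hBC : u b ≠ w a := huw b a
  refine ⟨?_, ?_, ?_⟩
  · rw [nbc_decomp (Y1 u w) (fun t ht => card_of_mem_Y1 hu hw huw ht) hAB hAC hBC,
      R2P1Y1 hu hw huw a b hab, R2P2Y1 hu hw huw a b hab, R2P3Y1 hu hw huw a b hab]
    omega
  · rw [nbc_decomp (Y2 u w) (fun t ht => card_of_mem_Y2 hu hw huw ht) hAB hAC hBC,
      R2P1Y2 hu hw huw a b hab, R2P2Y2 hu hw huw a b hab, R2P3Y2 hu hw huw a b hab]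
    have : 2 ≤ m := by
      rcases Nat.lt_or_ge m 2 with h | h
      · interval_cases m
        · exact absurd (Subsingleton.elim a b) hab
        · exact absurd (Subsingleton.elim a b) hab
      · exact h
    omega
  · rw [nbc_decomp (Y3 u w) (fun t ht => card_of_mem_Y3 hu hw huw ht) hAB hAC hBC,
      R2P1Y3 hu hw huw a b hab, R2P2Y3 hu hw huw a b hab, R2P3Y3 hu hw huw a b hab]
    omega

end counts2

section counts3
variable {m : ℕ} {u w : Fin m → Fin (2 * m)}
variable (hu : Function.Injective u) (hw : Function.Injective w)
  (huw : ∀ i j, u i ≠ w j)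

include hu hw huw

-- s = {u a, u b, w c}, pair {u a, u b}
lemma R3P1Y1 (a b c : Fin m) (hab : a ≠ b) (hac : a ≠ c) (hbc : b ≠ c) :
    (univ.filter fun x => x ∉ ({u a, u b, w c} : Finset (Fin (2 * m))) ∧
      insert x {u a, u b} ∈ Y1 u w).card = m - 2 := by
  rw [filter_split hu hw huw]
  have h1 : (univ.filter fun i => u i ∉ ({u a, u b, w c} : Finset (Fin (2 * m))) ∧
      insert (u i) {u a, u b} ∈ Y1 u w) = univ \ ({a, b} : Finset (Fin m)) := by
    ext i
    simp only [mem_filter, mem_univ, true_and, mem_sdiff, mem_insert, mem_singleton,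
      hu.eq_iff, huw, not_or]
    constructor
    · rintro ⟨⟨hia, hib, -⟩, -⟩; exact ⟨hia, hib⟩
    · rintro ⟨hia, hib⟩
      exact ⟨⟨hia, hib, not_false⟩, mem_Y1_uuu hu hw huw hia hib hab⟩
  have h2 : (univ.filter fun i => w i ∉ ({u a, u b, w c} : Finset (Fin (2 * m))) ∧
      insert (w i) {u a, u b} ∈ Y1 u w) = ∅ := by
    rw [filter_eq_empty_iff]
    rintro i - ⟨-, h⟩
    rw [rot3] at h
    exact notMem_Y1_uuw hu hw huw a b i h
  rw [h1, h2, card_sdiff2 hab, card_empty, Fintype.card_fin]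
  omega

lemma R3P1Y2 (a b c : Fin m) (hab : a ≠ b) (hac : a ≠ c) (hbc : b ≠ c) :
    (univ.filter fun x => x ∉ ({u a, u b, w c} : Finset (Fin (2 * m))) ∧
      insert x {u a, u b} ∈ Y2 u w).card = 2 := by
  rw [filter_split hu hw huw]
  have h1 : (univ.filter fun i => u i ∉ ({u a, u b, w c} : Finset (Fin (2 * m))) ∧
      insert (u i) {u a, u b} ∈ Y2 u w) = ∅ := by
    rw [filter_eq_empty_iff]
    rintro i - ⟨-, h⟩
    exact notMem_Y2_uuu hu hw huw i a b h
  have h2 : (univ.filter fun i => w i ∉ ({u a, u b, w c} : Finset (Fin (2 * m))) ∧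
      insert (w i) {u a, u b} ∈ Y2 u w) = ({a, b} : Finset (Fin m)) := by
    ext i
    simp only [mem_filter, mem_univ, true_and, mem_insert, mem_singleton,
      hw.eq_iff, huw' huw, not_or]
    constructor
    · rintro ⟨-, h⟩
      rw [rot3] at h
      exact (mem_Y2_uuw_iff hu hw huw i hab).mp h
    · rintro (h' | h')
      · rw [h']
        refine ⟨⟨not_false, not_false, hac⟩, ?_⟩
        rw [rot3]
        exact (mem_Y2_uuw_iff (a := a) (b := b) hu hw huw a hab).mpr (Or.inl rfl)
      · rw [h']
        refine ⟨⟨not_false, not_false, hbc⟩, ?_⟩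
        rw [rot3]
        exact (mem_Y2_uuw_iff (a := a) (b := b) hu hw huw b hab).mpr (Or.inr rfl)
  rw [h1, h2, card_empty, card_pair hab]

lemma R3P1Y3 (a b c : Fin m) (hab : a ≠ b) (hac : a ≠ c) (hbc : b ≠ c) :
    (univ.filter fun x => x ∉ ({u a, u b, w c} : Finset (Fin (2 * m))) ∧
      insert x {u a, u b} ∈ Y3 u w).card = m - 3 := by
  rw [filter_split hu hw huw]
  have h1 : (univ.filter fun i => u i ∉ ({u a, u b, w c} : Finset (Fin (2 * m))) ∧
      insert (u i) {u a, u b} ∈ Y3 u w) = ∅ := by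
    rw [filter_eq_empty_iff]
    rintro i - ⟨-, h⟩
    exact notMem_Y3_uuu hu hw huw i a b h
  have h2 : (univ.filter fun i => w i ∉ ({u a, u b, w c} : Finset (Fin (2 * m))) ∧
      insert (w i) {u a, u b} ∈ Y3 u w) = univ \ ({a, b, c} : Finset (Fin m)) := by
    ext i
    simp only [mem_filter, mem_univ, true_and, mem_sdiff, mem_insert, mem_singleton,
      hw.eq_iff, huw' huw, not_or]
    constructor
    · rintro ⟨⟨-, -, hic⟩, h⟩
      rw [rot3] at h
      obtain ⟨hia, hib⟩ := (mem_Y3_uuw_iff hu hw huw i hab).mp h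
      exact ⟨hia, hib, hic⟩
    · rintro ⟨hia, hib, hic⟩
      refine ⟨⟨not_false, not_false, hic⟩, ?_⟩
      rw [rot3]
      exact (mem_Y3_uuw_iff hu hw huw i hab).mpr ⟨hia, hib⟩
  rw [h1, h2, card_empty, card_sdiff3 hab hac hbc, Fintype.card_fin]
  omega

-- s = {u a, u b, w c}, pair {u a, w c}
lemma R3P2Y1 (a b c : Fin m) (hab : a ≠ b) (hac : a ≠ c) (hbc : b ≠ c) :
    (univ.filter fun x => x ∉ ({u a, u b, w c} : Finset (Fin (2 * m))) ∧
      insert x {u a, w c} ∈ Y1 u w).card = 0 := by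
  rw [filter_split hu hw huw]
  have h1 : (univ.filter fun i => u i ∉ ({u a, u b, w c} : Finset (Fin (2 * m))) ∧
      insert (u i) {u a, w c} ∈ Y1 u w) = ∅ := by
    rw [filter_eq_empty_iff]
    rintro i - ⟨-, h⟩
    exact notMem_Y1_uuw hu hw huw i a c h
  have h2 : (univ.filter fun i => w i ∉ ({u a, u b, w c} : Finset (Fin (2 * m))) ∧
      insert (w i) {u a, w c} ∈ Y1 u w) = ∅ := by
    rw [filter_eq_empty_iff]
    rintro i - ⟨-, h⟩
    rw [swap23, Y1_comm] at h
    exact notMem_Y1_uuw hw hu (huw' huw) i c a h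
  rw [h1, h2, card_empty]

lemma R3P2Y2 (a b c : Fin m) (hab : a ≠ b) (hac : a ≠ c) (hbc : b ≠ c) :
    (univ.filter fun x => x ∉ ({u a, u b, w c} : Finset (Fin (2 * m))) ∧
      insert x {u a, w c} ∈ Y2 u w).card = 2 := by
  rw [filter_split hu hw huw]
  have h1 : (univ.filter fun i => u i ∉ ({u a, u b, w c} : Finset (Fin (2 * m))) ∧
      insert (u i) {u a, w c} ∈ Y2 u w) = ({c} : Finset (Fin m)) := by
    ext i
    simp only [mem_filter, mem_univ, true_and, mem_insert, mem_singleton,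
      hu.eq_iff, huw, not_or]
    constructor
    · rintro ⟨⟨hia, hib, -⟩, h⟩
      rcases (mem_Y2_uuw_iff (a := i) (b := a) hu hw huw c hia).mp h with h' | h'
      · exact h'.symm
      · exact absurd h'.symm hac
    · intro h'
      rw [h']
      refine ⟨⟨fun h => hac h.symm, fun h => hbc h.symm, not_false⟩, ?_⟩
      exact (mem_Y2_uuw_iff (a := c) (b := a) hu hw huw c
        (fun h => hac h.symm)).mpr (Or.inl rfl)
  have h2 : (univ.filter fun i => w i ∉ ({u a, u b, w c} : Finset (Fin (2 * m))) ∧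
      insert (w i) {u a, w c} ∈ Y2 u w) = ({a} : Finset (Fin m)) := by
    ext i
    simp only [mem_filter, mem_univ, true_and, mem_insert, mem_singleton,
      hw.eq_iff, huw' huw, not_or]
    constructor
    · rintro ⟨⟨-, -, hic⟩, h⟩
      rw [swap23, Y2_comm] at h
      rcases (mem_Y2_uuw_iff (a := i) (b := c) hw hu (huw' huw) a hic).mp h with h' | h'
      · exact h'.symm
      · exact absurd h' hac
    · intro h'
      rw [h']
      refine ⟨⟨not_false, not_false, hac⟩, ?_⟩
      rw [swap23, Y2_comm]
      exact (mem_Y2_uuw_iff (a := a) (b := c) hw hu (huw' huw) a hac).mpr (Or.inl rfl)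
  rw [h1, h2]
  simp

lemma R3P2Y3 (a b c : Fin m) (hab : a ≠ b) (hac : a ≠ c) (hbc : b ≠ c) :
    (univ.filter fun x => x ∉ ({u a, u b, w c} : Finset (Fin (2 * m))) ∧
      insert x {u a, w c} ∈ Y3 u w).card = (m - 3) + (m - 2) := by
  rw [filter_split hu hw huw]
  have h1 : (univ.filter fun i => u i ∉ ({u a, u b, w c} : Finset (Fin (2 * m))) ∧
      insert (u i) {u a, w c} ∈ Y3 u w) = univ \ ({a, b, c} : Finset (Fin m)) := by
    ext i
    simp only [mem_filter, mem_univ, true_and, mem_sdiff, mem_insert, mem_singleton,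
      hu.eq_iff, huw, not_or]
    constructor
    · rintro ⟨⟨hia, hib, -⟩, h⟩
      obtain ⟨hci, -⟩ := (mem_Y3_uuw_iff (a := i) (b := a) hu hw huw c hia).mp h
      exact ⟨hia, hib, fun h' => hci h'.symm⟩
    · rintro ⟨hia, hib, hic⟩
      refine ⟨⟨hia, hib, not_false⟩, ?_⟩
      exact (mem_Y3_uuw_iff (a := i) (b := a) hu hw huw c hia).mpr
        ⟨fun h => hic h.symm, fun h => hac h.symm⟩
  have h2 : (univ.filter fun i => w i ∉ ({u a, u b, w c} : Finset (Fin (2 * m))) ∧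
      insert (w i) {u a, w c} ∈ Y3 u w) = univ \ ({a, c} : Finset (Fin m)) := by
    ext i
    simp only [mem_filter, mem_univ, true_and, mem_sdiff, mem_insert, mem_singleton,
      hw.eq_iff, huw' huw, not_or]
    constructor
    · rintro ⟨⟨-, -, hic⟩, h⟩
      rw [swap23, Y3_comm] at h
      obtain ⟨hai, -⟩ := (mem_Y3_uuw_iff (a := i) (b := c) hw hu (huw' huw) a hic).mp h
      exact ⟨fun h' => hai h'.symm, hic⟩
    · rintro ⟨hia, hic⟩
      refine ⟨⟨not_false, not_false, hic⟩, ?_⟩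
      rw [swap23, Y3_comm]
      exact (mem_Y3_uuw_iff (a := i) (b := c) hw hu (huw' huw) a hic).mpr
        ⟨fun h => hia h.symm, hac⟩
  rw [h1, h2, card_sdiff3 hab hac hbc, card_sdiff2 hac, Fintype.card_fin]

lemma row3 (a b c : Fin m) (hab : a ≠ b) (hac : a ≠ c) (hbc : b ≠ c) :
    nbc (Y1 u w) {u a, u b, w c} = m - 2 ∧
    nbc (Y2 u w) {u a, u b, w c} = 6 ∧
    nbc (Y3 u w) {u a, u b, w c} = 5 * m - 13 := by
  have hm : 3 ≤ m := by
    have h := card_le_univ ({a, b, c} : Finset (Fin m))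
    rw [triple_card hab hac hbc] at h
    simpa using h
  have hAB : u a ≠ u b := fun h => hab (hu h)
  have hAC : u a ≠ w c := huw a c
  have hBC : u b ≠ w c := huw b c
  have hs3 : ({u a, u b, w c} : Finset (Fin (2 * m))) = {u b, u a, w c} := swap12 _ _ _
  refine ⟨?_, ?_, ?_⟩
  · rw [nbc_decomp (Y1 u w) (fun t ht => card_of_mem_Y1 hu hw huw ht) hAB hAC hBC,
      R3P1Y1 hu hw huw a b c hab hac hbc, R3P2Y1 hu hw huw a b c hab hac hbc]
    have e3 : (univ.filter fun x => x ∉ ({u a, u b, w c} : Finset (Fin (2 * m))) ∧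
        insert x {u b, w c} ∈ Y1 u w).card = 0 := by
      rw [hs3]; exact R3P2Y1 hu hw huw b a c hab.symm hbc hac
    rw [e3]
    omega
  · rw [nbc_decomp (Y2 u w) (fun t ht => card_of_mem_Y2 hu hw huw ht) hAB hAC hBC,
      R3P1Y2 hu hw huw a b c hab hac hbc, R3P2Y2 hu hw huw a b c hab hac hbc]
    have e3 : (univ.filter fun x => x ∉ ({u a, u b, w c} : Finset (Fin (2 * m))) ∧
        insert x {u b, w c} ∈ Y2 u w).card = 2 := by
      rw [hs3]; exact R3P2Y2 hu hw huw b a c hab.symm hbc hac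
    rw [e3]
  · rw [nbc_decomp (Y3 u w) (fun t ht => card_of_mem_Y3 hu hw huw ht) hAB hAC hBC,
      R3P1Y3 hu hw huw a b c hab hac hbc, R3P2Y3 hu hw huw a b c hab hac hbc]
    have e3 : (univ.filter fun x => x ∉ ({u a, u b, w c} : Finset (Fin (2 * m))) ∧
        insert x {u b, w c} ∈ Y3 u w).card = (m - 3) + (m - 2) := by
      rw [hs3]; exact R3P2Y3 hu hw huw b a c hab.symm hbc hac
    rw [e3]
    omega

end counts3

section final
variable {m : ℕ} {u w : Fin m → Fin (2 * m)}
variable (hu : Function.Injective u) (hw : Function.Injective w)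
  (huw : ∀ i j, u i ≠ w j)

include hu hw huw

lemma complete_uuw (i j k : Fin m) (hij : i ≠ j) :
    ({u i, u j, w k} : Finset (Fin (2 * m))) ∈ Y1 u w ∪ Y2 u w ∪ Y3 u w := by
  rw [mem_union, mem_union]
  by_cases h : k = i ∨ k = j
  · exact Or.inl (Or.inr ((mem_Y2_uuw_iff hu hw huw k hij).mpr h))
  · push_neg at h
    exact Or.inr ((mem_Y3_uuw_iff hu hw huw k hij).mpr h)

lemma complete {s : Finset (Fin (2 * m))} (hs : s.card = 3) :
    s ∈ Y1 u w ∪ Y2 u w ∪ Y3 u w := by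
  obtain ⟨x, y, z, hxy, hxz, hyz, rfl⟩ := Finset.card_eq_three.mp hs
  have hcomm : Y1 u w ∪ Y2 u w ∪ Y3 u w = Y1 w u ∪ Y2 w u ∪ Y3 w u := by
    rw [Y1_comm, Y2_comm, Y3_comm]
  rcases cover hu hw huw x with ⟨i, rfl⟩ | ⟨i, rfl⟩ <;>
    rcases cover hu hw huw y with ⟨j, rfl⟩ | ⟨j, rfl⟩ <;>
    rcases cover hu hw huw z with ⟨k, rfl⟩ | ⟨k, rfl⟩
  · exact mem_union_left _ (mem_union_left _
      (mem_Y1_uuu hu hw huw (fun h => hxy (congrArg u h)) (fun h => hxz (congrArg u h))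
        (fun h => hyz (congrArg u h))))
  · exact complete_uuw hu hw huw i j k (fun h => hxy (congrArg u h))
  · rw [swap23]
    exact complete_uuw hu hw huw i k j (fun h => hxz (congrArg u h))
  · rw [rot3, hcomm]
    exact complete_uuw hw hu (huw' huw) j k i (fun h => hyz (congrArg w h))
  · rw [rot3]
    exact complete_uuw hu hw huw j k i (fun h => hyz (congrArg u h))
  · rw [swap23, hcomm]
    exact complete_uuw hw hu (huw' huw) i k j (fun h => hxz (congrArg w h))
  · rw [hcomm]
    exact complete_uuw hw hu (huw' huw) i j k (fun h => hxy (congrArg w h))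
  · rw [hcomm]
    exact mem_union_left _ (mem_union_left _
      (mem_Y1_uuu hw hu (huw' huw) (fun h => hxy (congrArg w h)) (fun h => hxz (congrArg w h))
        (fun h => hyz (congrArg w h))))

end final


/-- `{X₁, X₂, X₃}` is an equitable 3-partition of `J(2m,3)` with
quotient matrix `[[3m-9, 6, 3m-6], [m-2, 2m-1, 3m-6], [m-2, 6, 5m-13]]`. -/
theorem stmt4 (m : ℕ) (hm : 3 ≤ m) (u w : Fin m → Fin (2 * m))
    (hu : Function.Injective u) (hw : Function.Injective w)
    (huw : ∀ i j, u i ≠ w j) :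
    (∀ s : Finset (Fin (2 * m)), s.card = 3 ↔ s ∈ Y1 u w ∪ Y2 u w ∪ Y3 u w) ∧
    Disjoint (Y1 u w) (Y2 u w) ∧ Disjoint (Y1 u w) (Y3 u w) ∧
    Disjoint (Y2 u w) (Y3 u w) ∧
    (∀ s ∈ Y1 u w,
      nbc (Y1 u w) s = 3 * m - 9 ∧ nbc (Y2 u w) s = 6 ∧ nbc (Y3 u w) s = 3 * m - 6) ∧
    (∀ s ∈ Y2 u w,
      nbc (Y1 u w) s = m - 2 ∧ nbc (Y2 u w) s = 2 * m - 1 ∧ nbc (Y3 u w) s = 3 * m - 6) ∧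
    (∀ s ∈ Y3 u w,
      nbc (Y1 u w) s = m - 2 ∧ nbc (Y2 u w) s = 6 ∧ nbc (Y3 u w) s = 5 * m - 13) := by
  have hwu := huw' huw
  refine ⟨?_, ?_, ?_, ?_, ?_, ?_, ?_⟩
  · intro s
    constructor
    · exact fun hs => complete hu hw huw hs
    · intro hs
      rcases mem_union.mp hs with hs | hs
      · rcases mem_union.mp hs with hs | hs
        · exact card_of_mem_Y1 hu hw huw hs
        · exact card_of_mem_Y2 hu hw huw hs
      · exact card_of_mem_Y3 hu hw huw hs
  · rw [disjoint_left]
    intro s h1 h2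
    obtain ⟨i, j, hij, rfl | rfl⟩ := mem_Y2.mp h2
    · exact notMem_Y1_uuw hu hw huw i j i h1
    · rw [Y1_comm] at h1
      exact notMem_Y1_uuw hw hu hwu i j i h1
  · rw [disjoint_left]
    intro s h1 h3
    obtain ⟨i, j, k, hij, hik, hjk, rfl | rfl⟩ := mem_Y3.mp h3
    · exact notMem_Y1_uuw hu hw huw i j k h1
    · rw [Y1_comm] at h1
      exact notMem_Y1_uuw hw hu hwu i j k h1
  · rw [disjoint_left]
    intro s h2 h3
    obtain ⟨i, j, hij, rfl | rfl⟩ := mem_Y2.mp h2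
    · exact ((mem_Y3_uuw_iff hu hw huw i hij).mp h3).1 rfl
    · rw [Y3_comm] at h3
      exact ((mem_Y3_uuw_iff hw hu hwu i hij).mp h3).1 rfl
  · intro s hs
    obtain ⟨hc, h | h⟩ := mem_Y1.mp hs
    · obtain ⟨x, y, z, hxy, hxz, hyz, rfl⟩ := Finset.card_eq_three.mp hc
      obtain ⟨i, rfl⟩ := h x (by simp)
      obtain ⟨j, rfl⟩ := h y (by simp)
      obtain ⟨k, rfl⟩ := h z (by simp)
      exact row1 hu hw huw i j k (fun h' => hxy (congrArg u h'))
        (fun h' => hxz (congrArg u h')) (fun h' => hyz (congrArg u h'))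
    · obtain ⟨x, y, z, hxy, hxz, hyz, rfl⟩ := Finset.card_eq_three.mp hc
      obtain ⟨i, rfl⟩ := h x (by simp)
      obtain ⟨j, rfl⟩ := h y (by simp)
      obtain ⟨k, rfl⟩ := h z (by simp)
      rw [Y1_comm, Y2_comm, Y3_comm]
      exact row1 hw hu hwu i j k (fun h' => hxy (congrArg w h'))
        (fun h' => hxz (congrArg w h')) (fun h' => hyz (congrArg w h'))
  · intro s hs
    obtain ⟨i, j, hij, rfl | rfl⟩ := mem_Y2.mp hs
    · exact row2 hu hw huw i j hij
    · rw [Y1_comm, Y2_comm, Y3_comm]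
      exact row2 hw hu hwu i j hij
  · intro s hs
    obtain ⟨i, j, k, hij, hik, hjk, rfl | rfl⟩ := mem_Y3.mp hs
    · exact row3 hu hw huw i j k hij hik hjk
    · rw [Y1_comm, Y2_comm, Y3_comm]
      exact row3 hw hu hwu i j k hij hik hjk
end decomp
end

section
/- Let m ≥ 3 and {X₁, X₂, X₃} be the equitable 3-partition of J(2m,3) arising from a perfect matching on [2m] (X₁: triples within one side; X₂: triples {u_i,u_j,w_i} or {w_i,w_j,u_i}; X₃: triples {u_i,u_j,w_k} or {w_i,w_j,u_k} with i,j,k distinct). Then Π₁ = {X₂ ∪ X₃, X₁} is an equitable 2-partition of J(2m,3) with quotient matrix [[5m-7, m-2], [3m, 3m-9]]. -/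
open Finset

lemma nbc_eq_sum {n : ℕ} (Q : Finset (Fin n) → Prop) [DecidablePred Q]
    (hQ : ∀ t, Q t → t.card = 3) (s : Finset (Fin n)) :
    nbc (univ.filter Q) s
      = ∑ p ∈ s.powersetCard 2, ((sᶜ).filter (fun x => Q (insert x p))).card := by
  unfold nbc
  rw [filter_filter]
  have key : (univ.filter fun t => Q t ∧ (s ∩ t).card = 2)
      = (s.powersetCard 2).biUnion
          (fun p => ((sᶜ).filter (fun x => Q (insert x p))).image (fun x => insert x p)) := by
    ext t
    simp only [mem_filter, mem_univ, true_and, mem_biUnion, mem_powersetCard, mem_image,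
      mem_compl]
    constructor
    · rintro ⟨hQt, hcard⟩
      have h3 := hQ t hQt
      have hsub : s ∩ t ⊆ s := inter_subset_left
      have htsd : (t \ s).card = 1 := by
        have := card_sdiff_add_card_inter t s
        rw [inter_comm] at this
        omega
      obtain ⟨x, hx⟩ := card_eq_one.mp htsd
      have hxt : x ∈ t ∧ x ∉ s := by
        have : x ∈ t \ s := hx ▸ mem_singleton_self x
        exact ⟨(mem_sdiff.mp this).1, (mem_sdiff.mp this).2⟩
      have ht : insert x (s ∩ t) = t := by
        ext y
        simp only [mem_insert, mem_inter]
        constructor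
        · rintro (rfl | h); exact hxt.1; exact h.2
        · intro hy
          by_cases hys : y ∈ s
          · exact Or.inr ⟨hys, hy⟩
          · left
            have : y ∈ t \ s := mem_sdiff.mpr ⟨hy, hys⟩
            rw [hx] at this; exact mem_singleton.mp this
      exact ⟨s ∩ t, ⟨hsub, hcard⟩, x, ⟨hxt.2, by rw [ht]; exact hQt⟩, ht⟩
    · rintro ⟨p, ⟨hps, hp2⟩, x, ⟨hxs, hQi⟩, rfl⟩
      refine ⟨hQi, ?_⟩
      have : s ∩ insert x p = p := by
        rw [inter_comm, insert_inter_of_notMem hxs, inter_eq_left.mpr hps]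
      rw [this, hp2]
  rw [key]
  apply card_biUnion ?_ |>.trans
  · apply Finset.sum_congr rfl
    intro p hp
    obtain ⟨hps, hp2⟩ := mem_powersetCard.mp hp
    apply card_image_of_injOn
    intro x hx y hy hxy
    simp only [coe_filter, Set.mem_setOf_eq, mem_compl] at hx hy
    have hxy' : insert x p = insert y p := hxy
    have hxp : x ∉ p := fun h => hx.1 (hps h)
    have : x ∈ insert y p := hxy' ▸ mem_insert_self x p
    rcases mem_insert.mp this with h | h
    · exact h
    · exact absurd h hxp
  · intro p hp q hq hpq
    simp only [disjoint_left, mem_image]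
    rintro t ⟨x, hx, rfl⟩ ⟨y, hy, hyq⟩
    simp only [mem_filter, mem_compl] at hx hy
    obtain ⟨hps, _⟩ := mem_powersetCard.mp hp
    obtain ⟨hqs, _⟩ := mem_powersetCard.mp hq
    apply hpq
    have e1 : s ∩ insert x p = p := by
      rw [inter_comm, insert_inter_of_notMem hx.1, inter_eq_left.mpr hps]
    have e2 : s ∩ insert y q = q := by
      rw [inter_comm, insert_inter_of_notMem hy.1, inter_eq_left.mpr hqs]
    rw [← e1, ← hyq, e2]


lemma pc2_triple {α} [DecidableEq α] {a b c : α} (hab : a ≠ b) (hac : a ≠ c) (hbc : b ≠ c) :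
    ({a,b,c} : Finset α).powersetCard 2 = {{a,b},{a,c},{b,c}} := by
  ext t
  simp only [mem_powersetCard, mem_insert, mem_singleton]
  constructor
  · rintro ⟨hsub, h2⟩
    obtain ⟨x, y, hxy, rfl⟩ := card_eq_two.mp h2
    have hx := hsub (mem_insert_self x {y})
    have hy := hsub (mem_insert_of_mem (mem_singleton_self y))
    simp only [mem_insert, mem_singleton] at hx hy
    rcases hx with rfl | rfl | rfl <;> rcases hy with rfl | rfl | rfl <;>
      first
      | exact absurd rfl hxy
      | simp [Finset.pair_comm]
  · rintro (rfl | rfl | rfl) <;>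
      refine ⟨?_, ?_⟩ <;>
      simp_all [insert_subset_iff, card_insert_of_notMem, hab, hac, hbc]
lemma sum_triple {α M} [DecidableEq α] [AddCommMonoid M] {a b c : α} (hab : a ≠ b) (hac : a ≠ c) (hbc : b ≠ c)
    (f : α → M) : ∑ x ∈ ({a,b,c} : Finset α), f x = f a + f b + f c := by
  rw [sum_insert (by simp [hab, hac]), sum_insert (by simp [hbc]), sum_singleton, add_assoc]


lemma mem_cross_of_u {n m : ℕ} (u w : Fin m → Fin n) (i j k : Fin m) (hij : i ≠ j) :
    ({u i, u j, w k} : Finset (Fin n)) ∈ Y2 u w ∪ Y3 u w := by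
  rcases eq_or_ne k i with rfl | hki
  · exact mem_union_left _ (mem_filter.mpr ⟨mem_univ _, k, j, hij, Or.inl rfl⟩)
  · rcases eq_or_ne k j with rfl | hkj
    · refine mem_union_left _ (mem_filter.mpr ⟨mem_univ _, k, i, hij.symm, Or.inl ?_⟩)
      ext q; simp; tauto
    · exact mem_union_right _ (mem_filter.mpr ⟨mem_univ _, i, j, k, hij, (Ne.symm hki), (Ne.symm hkj), Or.inl rfl⟩)

lemma mem_cross_of_w {n m : ℕ} (u w : Fin m → Fin n) (i j k : Fin m) (hij : i ≠ j) :
    ({w i, w j, u k} : Finset (Fin n)) ∈ Y2 u w ∪ Y3 u w := by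
  rcases eq_or_ne k i with rfl | hki
  · exact mem_union_left _ (mem_filter.mpr ⟨mem_univ _, k, j, hij, Or.inr rfl⟩)
  · rcases eq_or_ne k j with rfl | hkj
    · refine mem_union_left _ (mem_filter.mpr ⟨mem_univ _, k, i, hij.symm, Or.inr ?_⟩)
      ext q; simp; tauto
    · exact mem_union_right _ (mem_filter.mpr ⟨mem_univ _, i, j, k, hij, (Ne.symm hki), (Ne.symm hkj), Or.inr rfl⟩)

lemma cross_back {n m : ℕ} (u w : Fin m → Fin n)
    (hu : Function.Injective u) (hw : Function.Injective w)
    (hcov : (univ.image u) ∪ (univ.image w) = univ)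
    (s : Finset (Fin n)) (h3 : s.card = 3)
    (hnA : ¬ s ⊆ univ.image u) (hnB : ¬ s ⊆ univ.image w) :
    s ∈ Y2 u w ∪ Y3 u w := by
  obtain ⟨x, y, z, hxy, hxz, hyz, rfl⟩ := card_eq_three.mp h3
  have hmem : ∀ t : Fin n, (∃ i, u i = t) ∨ (∃ i, w i = t) := by
    intro t
    have : t ∈ univ.image u ∪ univ.image w := hcov ▸ mem_univ t
    rcases mem_union.mp this with h | h
    · obtain ⟨i, -, hi⟩ := mem_image.mp h; exact Or.inl ⟨i, hi⟩
    · obtain ⟨i, -, hi⟩ := mem_image.mp h; exact Or.inr ⟨i, hi⟩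
  have memu : ∀ i : Fin m, u i ∈ univ.image u := fun i => mem_image.mpr ⟨i, mem_univ i, rfl⟩
  have memw : ∀ i : Fin m, w i ∈ univ.image w := fun i => mem_image.mpr ⟨i, mem_univ i, rfl⟩
  rcases hmem x with ⟨i, rfl⟩ | ⟨i, rfl⟩ <;>
    rcases hmem y with ⟨j, rfl⟩ | ⟨j, rfl⟩ <;>
    rcases hmem z with ⟨k, rfl⟩ | ⟨k, rfl⟩
  · exact absurd (by simp [insert_subset_iff, memu]) hnA
  · exact mem_cross_of_u u w i j k (fun h => hxy (by rw [h]))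
  · have e : ({u i, w j, u k} : Finset (Fin n)) = {u i, u k, w j} := by ext q; simp; tauto
    rw [e]; exact mem_cross_of_u u w i k j (fun h => hxz (by rw [h]))
  · have e : ({u i, w j, w k} : Finset (Fin n)) = {w j, w k, u i} := by ext q; simp; tauto
    rw [e]; exact mem_cross_of_w u w j k i (fun h => hyz (by rw [h]))
  · have e : ({w i, u j, u k} : Finset (Fin n)) = {u j, u k, w i} := by ext q; simp; tauto
    rw [e]; exact mem_cross_of_u u w j k i (fun h => hyz (by rw [h]))
  · have e : ({w i, u j, w k} : Finset (Fin n)) = {w i, w k, u j} := by ext q; simp; tauto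
    rw [e]; exact mem_cross_of_w u w i k j (fun h => hxz (by rw [h]))
  · exact mem_cross_of_w u w i j k (fun h => hxy (by rw [h]))
  · exact absurd (by simp [insert_subset_iff, memw]) hnB


section
variable {n m : ℕ} {A B : Finset (Fin n)}


lemma filtC_AA (hdisj : Disjoint A B) (hcov : A ∪ B = univ)
    {a b : Fin n} (ha : a ∈ A) (hb : b ∈ A) (hab : a ≠ b) (s : Finset (Fin n)) :
    ((sᶜ).filter (fun x => (insert x ({a,b} : Finset (Fin n))).card = 3 ∧
      ¬ insert x ({a,b} : Finset (Fin n)) ⊆ A ∧ ¬ insert x ({a,b} : Finset (Fin n)) ⊆ B))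
      = B \ s := by
  ext x
  simp only [mem_filter, mem_compl, mem_sdiff, insert_subset_iff]
  constructor
  · rintro ⟨hxs, -, hnA, -⟩
    refine ⟨?_, hxs⟩
    have hxA : x ∉ A := fun h => hnA ⟨h, ha, by simp [hb]⟩
    have : x ∈ A ∪ B := hcov ▸ mem_univ x
    rcases mem_union.mp this with h | h
    · exact absurd h hxA
    · exact h
  · rintro ⟨hxB, hxs⟩
    have hxA : x ∉ A := disjoint_right.mp hdisj hxB
    have hxa : x ≠ a := fun h => hxA (h ▸ ha)
    have hxb : x ≠ b := fun h => hxA (h ▸ hb)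
    have haB : a ∉ B := disjoint_left.mp hdisj ha
    refine ⟨hxs, ?_, fun h => hxA h.1, fun h => haB h.2.1⟩
    rw [card_insert_of_notMem (by simp [hxa, hxb]),
      card_insert_of_notMem (by simp [hab]), card_singleton]

lemma filtC_AB (hdisj : Disjoint A B)
    {a c : Fin n} (ha : a ∈ A) (hc : c ∈ B) {s : Finset (Fin n)}
    (has : a ∈ s) (hcs : c ∈ s) :
    ((sᶜ).filter (fun x => (insert x ({a,c} : Finset (Fin n))).card = 3 ∧
      ¬ insert x ({a,c} : Finset (Fin n)) ⊆ A ∧ ¬ insert x ({a,c} : Finset (Fin n)) ⊆ B))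
      = sᶜ := by
  apply filter_true_of_mem
  intro x hx
  rw [mem_compl] at hx
  have hxa : x ≠ a := fun h => hx (h ▸ has)
  have hxc : x ≠ c := fun h => hx (h ▸ hcs)
  have hac : a ≠ c := fun h => (disjoint_left.mp hdisj ha) (h ▸ hc)
  have hcA : c ∉ A := disjoint_right.mp hdisj hc
  have haB : a ∉ B := disjoint_left.mp hdisj ha
  refine ⟨?_, ?_, ?_⟩
  · rw [card_insert_of_notMem (by simp [hxa, hxc]),
      card_insert_of_notMem (by simp [hac]), card_singleton]
  · simp only [insert_subset_iff, singleton_subset_iff]; rintro ⟨-, -, h⟩; exact hcA h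
  · simp only [insert_subset_iff, singleton_subset_iff]; rintro ⟨-, h, -⟩; exact haB h

lemma filt1_AA (hdisj : Disjoint A B) (hcov : A ∪ B = univ)
    {a b : Fin n} (ha : a ∈ A) (hb : b ∈ A) (hab : a ≠ b) {s : Finset (Fin n)}
    (has : a ∈ s) (hbs : b ∈ s) :
    ((sᶜ).filter (fun x => (insert x ({a,b} : Finset (Fin n))).card = 3 ∧
      (insert x ({a,b} : Finset (Fin n)) ⊆ A ∨ insert x ({a,b} : Finset (Fin n)) ⊆ B)))
      = A \ s := by
  have haB : a ∉ B := disjoint_left.mp hdisj ha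
  ext x
  simp only [mem_filter, mem_compl, mem_sdiff, insert_subset_iff]
  constructor
  · rintro ⟨hxs, -, ⟨h, -⟩ | ⟨-, h, -⟩⟩
    · exact ⟨h, hxs⟩
    · exact absurd h haB
  · rintro ⟨hxA, hxs⟩
    have hxa : x ≠ a := fun h => hxs (h ▸ has)
    have hxb : x ≠ b := fun h => hxs (h ▸ hbs)
    refine ⟨hxs, ?_, Or.inl ⟨hxA, ha, by simp [hb]⟩⟩
    rw [card_insert_of_notMem (by simp [hxa, hxb]),
      card_insert_of_notMem (by simp [hab]), card_singleton]

lemma filt1_AB (hdisj : Disjoint A B)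
    {a c : Fin n} (ha : a ∈ A) (hc : c ∈ B) (s : Finset (Fin n)) :
    ((sᶜ).filter (fun x => (insert x ({a,c} : Finset (Fin n))).card = 3 ∧
      (insert x ({a,c} : Finset (Fin n)) ⊆ A ∨ insert x ({a,c} : Finset (Fin n)) ⊆ B)))
      = ∅ := by
  have haB : a ∉ B := disjoint_left.mp hdisj ha
  have hcA : c ∉ A := disjoint_right.mp hdisj hc
  apply filter_false_of_mem
  intro x hx
  simp only [insert_subset_iff, singleton_subset_iff]
  rintro ⟨-, ⟨-, -, h⟩ | ⟨-, h, -⟩⟩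
  · exact hcA h
  · exact haB h


lemma ne_pair_of {α : Type*} [DecidableEq α] {x a b : α} {S : Finset α}
    (hx : x ∈ S) (h1 : x ≠ a) (h2 : x ≠ b) : ({a,b} : Finset α) ≠ S := by
  intro h
  rw [← h] at hx
  simp only [mem_insert, mem_singleton] at hx
  tauto

lemma card_compl_triple (hn : n = 2 * m) {a b c : Fin n}
    (hab : a ≠ b) (hac : a ≠ c) (hbc : b ≠ c) :
    (({a,b,c} : Finset (Fin n))ᶜ).card = 2 * m - 3 := by
  rw [card_compl]
  have : ({a,b,c} : Finset (Fin n)).card = 3 := by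
    rw [card_insert_of_notMem (by simp [hab, hac]),
      card_insert_of_notMem (by simp [hbc]), card_singleton]
  rw [this, Fintype.card_fin, hn]

lemma nbc_cross_cross (hdisj : Disjoint A B) (hcov : A ∪ B = univ)
    (hA : A.card = m) (hB : B.card = m) (hn : n = 2 * m) (hm : 3 ≤ m)
    {a b c : Fin n} (ha : a ∈ A) (hb : b ∈ A) (hc : c ∈ B) (hab : a ≠ b) :
    nbc (univ.filter fun t : Finset (Fin n) => t.card = 3 ∧ ¬ t ⊆ A ∧ ¬ t ⊆ B) {a,b,c}
      = 5 * m - 7 := by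
  have hac : a ≠ c := fun h => (disjoint_left.mp hdisj ha) (h ▸ hc)
  have hbc : b ≠ c := fun h => (disjoint_left.mp hdisj hb) (h ▸ hc)
  rw [nbc_eq_sum _ (fun t ht => ht.1), pc2_triple hab hac hbc,
    sum_triple (ne_pair_of (show c ∈ ({a,c} : Finset (Fin n)) by simp) hac.symm hbc.symm)
      (ne_pair_of (show c ∈ ({b,c} : Finset (Fin n)) by simp) hac.symm hbc.symm)
      (ne_pair_of (show b ∈ ({b,c} : Finset (Fin n)) by simp) hab.symm hbc),
    filtC_AA hdisj hcov ha hb hab,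
    filtC_AB hdisj ha hc (by simp) (by simp),
    filtC_AB hdisj hb hc (by simp) (by simp),
    card_compl_triple hn hab hac hbc]
  have hBs : (B \ ({a,b,c} : Finset (Fin n))).card = m - 1 := by
    have hint : B ∩ ({a,b,c} : Finset (Fin n)) = {c} := by
      ext x
      simp only [mem_inter, mem_insert, mem_singleton]
      constructor
      · rintro ⟨hxB, rfl | rfl | rfl⟩
        · exact absurd hxB (disjoint_left.mp hdisj ha)
        · exact absurd hxB (disjoint_left.mp hdisj hb)
        · rfl
      · rintro rfl; exact ⟨hc, by tauto⟩
    have := card_sdiff_add_card_inter B ({a,b,c} : Finset (Fin n))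
    rw [hint, card_singleton, hB] at this
    omega
  rw [hBs]
  omega

lemma nbc_Y1_cross (hdisj : Disjoint A B) (hcov : A ∪ B = univ)
    (hA : A.card = m) (hB : B.card = m) (hn : n = 2 * m) (hm : 3 ≤ m)
    {a b c : Fin n} (ha : a ∈ A) (hb : b ∈ A) (hc : c ∈ B) (hab : a ≠ b) :
    nbc (univ.filter fun t : Finset (Fin n) => t.card = 3 ∧ (t ⊆ A ∨ t ⊆ B)) {a,b,c}
      = m - 2 := by
  have hac : a ≠ c := fun h => (disjoint_left.mp hdisj ha) (h ▸ hc)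
  have hbc : b ≠ c := fun h => (disjoint_left.mp hdisj hb) (h ▸ hc)
  rw [nbc_eq_sum _ (fun t ht => ht.1), pc2_triple hab hac hbc,
    sum_triple (ne_pair_of (show c ∈ ({a,c} : Finset (Fin n)) by simp) hac.symm hbc.symm)
      (ne_pair_of (show c ∈ ({b,c} : Finset (Fin n)) by simp) hac.symm hbc.symm)
      (ne_pair_of (show b ∈ ({b,c} : Finset (Fin n)) by simp) hab.symm hbc),
    filt1_AA hdisj hcov ha hb hab (by simp) (by simp),
    filt1_AB hdisj ha hc, filt1_AB hdisj hb hc]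
  have hAs : (A \ ({a,b,c} : Finset (Fin n))).card = m - 2 := by
    have hint : A ∩ ({a,b,c} : Finset (Fin n)) = {a, b} := by
      ext x
      simp only [mem_inter, mem_insert, mem_singleton]
      constructor
      · rintro ⟨hxA, rfl | rfl | rfl⟩
        · tauto
        · tauto
        · exact absurd hxA (disjoint_right.mp hdisj hc)
      · rintro (rfl | rfl)
        · exact ⟨ha, by tauto⟩
        · exact ⟨hb, by tauto⟩
    have h2 : ({a, b} : Finset (Fin n)).card = 2 := by
      rw [card_insert_of_notMem (by simp [hab]), card_singleton]
    have := card_sdiff_add_card_inter A ({a,b,c} : Finset (Fin n))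
    rw [hint, h2, hA] at this
    omega
  rw [hAs, card_empty]
  omega

lemma nbc_cross_Y1 (hdisj : Disjoint A B) (hcov : A ∪ B = univ)
    (hA : A.card = m) (hB : B.card = m) (hn : n = 2 * m) (hm : 3 ≤ m)
    {a b c : Fin n} (ha : a ∈ A) (hb : b ∈ A) (hc : c ∈ A)
    (hab : a ≠ b) (hac : a ≠ c) (hbc : b ≠ c) :
    nbc (univ.filter fun t : Finset (Fin n) => t.card = 3 ∧ ¬ t ⊆ A ∧ ¬ t ⊆ B) {a,b,c}
      = 3 * m := by
  have hBs : (B \ ({a,b,c} : Finset (Fin n))).card = m := by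
    have hint : B ∩ ({a,b,c} : Finset (Fin n)) = ∅ := by
      ext x
      simp only [mem_inter, mem_insert, mem_singleton, notMem_empty, iff_false, not_and]
      rintro hxB (rfl | rfl | rfl)
      · exact (disjoint_left.mp hdisj ha) hxB
      · exact (disjoint_left.mp hdisj hb) hxB
      · exact (disjoint_left.mp hdisj hc) hxB
    have := card_sdiff_add_card_inter B ({a,b,c} : Finset (Fin n))
    rw [hint, card_empty, hB] at this
    omega
  rw [nbc_eq_sum _ (fun t ht => ht.1), pc2_triple hab hac hbc,
    sum_triple (ne_pair_of (show c ∈ ({a,c} : Finset (Fin n)) by simp) hac.symm hbc.symm)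
      (ne_pair_of (show c ∈ ({b,c} : Finset (Fin n)) by simp) hac.symm hbc.symm)
      (ne_pair_of (show b ∈ ({b,c} : Finset (Fin n)) by simp) hab.symm hbc),
    filtC_AA hdisj hcov ha hb hab, filtC_AA hdisj hcov ha hc hac,
    filtC_AA hdisj hcov hb hc hbc, hBs]
  omega

lemma nbc_Y1_Y1 (hdisj : Disjoint A B) (hcov : A ∪ B = univ)
    (hA : A.card = m) (hB : B.card = m) (hn : n = 2 * m) (hm : 3 ≤ m)
    {a b c : Fin n} (ha : a ∈ A) (hb : b ∈ A) (hc : c ∈ A)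
    (hab : a ≠ b) (hac : a ≠ c) (hbc : b ≠ c) :
    nbc (univ.filter fun t : Finset (Fin n) => t.card = 3 ∧ (t ⊆ A ∨ t ⊆ B)) {a,b,c}
      = 3 * m - 9 := by
  have hAs : (A \ ({a,b,c} : Finset (Fin n))).card = m - 3 := by
    have hint : A ∩ ({a,b,c} : Finset (Fin n)) = {a,b,c} := by
      rw [inter_eq_right]
      intro x hx
      simp only [mem_insert, mem_singleton] at hx
      rcases hx with rfl | rfl | rfl <;> assumption
    have h3 : ({a,b,c} : Finset (Fin n)).card = 3 := by
      rw [card_insert_of_notMem (by simp [hab, hac]),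
        card_insert_of_notMem (by simp [hbc]), card_singleton]
    have := card_sdiff_add_card_inter A ({a,b,c} : Finset (Fin n))
    rw [hint, h3, hA] at this
    omega
  rw [nbc_eq_sum _ (fun t ht => ht.1), pc2_triple hab hac hbc,
    sum_triple (ne_pair_of (show c ∈ ({a,c} : Finset (Fin n)) by simp) hac.symm hbc.symm)
      (ne_pair_of (show c ∈ ({b,c} : Finset (Fin n)) by simp) hac.symm hbc.symm)
      (ne_pair_of (show b ∈ ({b,c} : Finset (Fin n)) by simp) hab.symm hbc),
    filt1_AA hdisj hcov ha hb hab (by simp) (by simp),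
    filt1_AA hdisj hcov ha hc hac (by simp) (by simp),
    filt1_AA hdisj hcov hb hc hbc (by simp) (by simp), hAs]
  omega
end


lemma cross_decomp {n : ℕ} {A B : Finset (Fin n)} (hcov : A ∪ B = univ)
    {s : Finset (Fin n)} (h3 : s.card = 3) (hnA : ¬ s ⊆ A) (hnB : ¬ s ⊆ B) :
    ∃ a b c : Fin n, a ≠ b ∧ s = {a,b,c} ∧
      ((a ∈ A ∧ b ∈ A ∧ c ∈ B) ∨ (a ∈ B ∧ b ∈ B ∧ c ∈ A)) := by
  obtain ⟨x, y, z, hxy, hxz, hyz, rfl⟩ := card_eq_three.mp h3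
  have hmem : ∀ t : Fin n, t ∈ A ∨ t ∈ B := fun t =>
    mem_union.mp (hcov ▸ mem_univ t)
  have hsubA : ¬ (x ∈ A ∧ y ∈ A ∧ z ∈ A) := by
    intro ⟨h1, h2, h3⟩
    exact hnA (by simp [insert_subset_iff, h1, h2, h3])
  have hsubB : ¬ (x ∈ B ∧ y ∈ B ∧ z ∈ B) := by
    intro ⟨h1, h2, h3⟩
    exact hnB (by simp [insert_subset_iff, h1, h2, h3])
  rcases hmem x with hx | hx <;> rcases hmem y with hy | hy <;> rcases hmem z with hz | hz
  · rcases hmem z with hz' | hz'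
    · exact absurd ⟨hx, hy, hz⟩ hsubA
    · exact ⟨x, y, z, hxy, rfl, Or.inl ⟨hx, hy, hz'⟩⟩
  · exact ⟨x, y, z, hxy, rfl, Or.inl ⟨hx, hy, hz⟩⟩
  · exact ⟨x, z, y, hxz, by ext q; simp; tauto, Or.inl ⟨hx, hz, hy⟩⟩
  · exact ⟨y, z, x, hyz, by ext q; simp; tauto, Or.inr ⟨hy, hz, hx⟩⟩
  · exact ⟨y, z, x, hyz, by ext q; simp; tauto, Or.inl ⟨hy, hz, hx⟩⟩
  · exact ⟨x, z, y, hxz, by ext q; simp; tauto, Or.inr ⟨hx, hz, hy⟩⟩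
  · exact ⟨x, y, z, hxy, rfl, Or.inr ⟨hx, hy, hz⟩⟩
  · exact absurd ⟨hx, hy, hz⟩ hsubB

lemma sub_decomp {n : ℕ} {A : Finset (Fin n)}
    {s : Finset (Fin n)} (h3 : s.card = 3) (hsA : s ⊆ A) :
    ∃ a b c : Fin n, a ≠ b ∧ a ≠ c ∧ b ≠ c ∧ s = {a,b,c} ∧ a ∈ A ∧ b ∈ A ∧ c ∈ A := by
  obtain ⟨x, y, z, hxy, hxz, hyz, rfl⟩ := card_eq_three.mp h3
  exact ⟨x, y, z, hxy, hxz, hyz, rfl, hsA (by simp), hsA (by simp), hsA (by simp)⟩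

section Main

variable {n m : ℕ} (u w : Fin m → Fin n)

lemma Y1_eq :
    Y1 u w = univ.filter fun s => s.card = 3 ∧
      (s ⊆ univ.image u ∨ s ⊆ univ.image w) := by
  unfold Y1
  apply filter_congr
  intro s _
  have h1 : (∀ x ∈ s, ∃ i, u i = x) ↔ s ⊆ univ.image u := by
    constructor
    · intro h x hx; obtain ⟨i, hi⟩ := h x hx; exact mem_image.mpr ⟨i, mem_univ i, hi⟩
    · intro h x hx; obtain ⟨i, _, hi⟩ := mem_image.mp (h hx); exact ⟨i, hi⟩
  have h2 : (∀ x ∈ s, ∃ i, w i = x) ↔ s ⊆ univ.image w := by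
    constructor
    · intro h x hx; obtain ⟨i, hi⟩ := h x hx; exact mem_image.mpr ⟨i, mem_univ i, hi⟩
    · intro h x hx; obtain ⟨i, _, hi⟩ := mem_image.mp (h hx); exact ⟨i, hi⟩
  rw [h1, h2]

variable (hu : Function.Injective u) (hw : Function.Injective w)
    (huw : ∀ i j, u i ≠ w j)

include hu hw huw in
lemma cross_eq (hcov : (univ.image u) ∪ (univ.image w) = univ) :
    Y2 u w ∪ Y3 u w = univ.filter fun s => s.card = 3 ∧
      ¬ s ⊆ univ.image u ∧ ¬ s ⊆ univ.image w := by
  have hA : ∀ i, u i ∈ univ.image u := fun i => mem_image.mpr ⟨i, mem_univ i, rfl⟩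
  have hB : ∀ i, w i ∈ univ.image w := fun i => mem_image.mpr ⟨i, mem_univ i, rfl⟩
  have hAnB : ∀ x, x ∈ univ.image u → x ∉ univ.image w := by
    intro x hx hx'
    obtain ⟨i, _, rfl⟩ := mem_image.mp hx
    obtain ⟨j, _, hj⟩ := mem_image.mp hx'
    exact huw i j hj.symm
  ext s
  constructor
  · intro hs
    rw [mem_filter]
    refine ⟨mem_univ s, ?_⟩
    rcases mem_union.mp hs with hs | hs
    · obtain ⟨-, i, j, hij, rfl | rfl⟩ := mem_filter.mp hs
      · refine ⟨?_, ?_, ?_⟩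
        · rw [card_insert_of_notMem (by simp [hu.ne hij, (huw i i)]),
            card_insert_of_notMem (by simp [huw j i]), card_singleton]
        · intro h
          exact hAnB _ (h (by simp)) (hB i)
        · intro h
          exact hAnB _ (hA i) (h (by simp))
      · refine ⟨?_, ?_, ?_⟩
        · rw [card_insert_of_notMem (by simp [hw.ne hij, (huw i i).symm]),
            card_insert_of_notMem (by simp [(huw i j).symm]), card_singleton]
        · intro h
          exact hAnB _ (h (by simp)) (hB i)
        · intro h
          exact hAnB _ (hA i) (h (by simp))
    · obtain ⟨-, i, j, k, hij, hik, hjk, rfl | rfl⟩ := mem_filter.mp hs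
      · refine ⟨?_, ?_, ?_⟩
        · rw [card_insert_of_notMem (by simp [hu.ne hij, (huw i k)]),
            card_insert_of_notMem (by simp [huw j k]), card_singleton]
        · intro h
          exact hAnB _ (h (by simp)) (hB k)
        · intro h
          exact hAnB _ (hA i) (h (by simp))
      · refine ⟨?_, ?_, ?_⟩
        · rw [card_insert_of_notMem (by simp [hw.ne hij, (huw k i).symm]),
            card_insert_of_notMem (by simp [(huw k j).symm]), card_singleton]
        · intro h
          exact hAnB _ (h (by simp)) (hB i)
        · intro h
          exact hAnB _ (hA k) (h (by simp))
  · intro hs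
    obtain ⟨-, h3, hnA, hnB⟩ := mem_filter.mp hs
    exact cross_back u w hu hw hcov s h3 hnA hnB

end Main

/-- `Π₁ = {X₂ ∪ X₃, X₁}` is an equitable 2-partition of `J(2m,3)`
with quotient matrix `[[5m-7, m-2], [3m, 3m-9]]`. -/
theorem stmt5 (m : ℕ) (hm : 3 ≤ m) (u w : Fin m → Fin (2 * m))
    (hu : Function.Injective u) (hw : Function.Injective w)
    (huw : ∀ i j, u i ≠ w j) :
    (∀ s : Finset (Fin (2 * m)), s.card = 3 ↔ s ∈ (Y2 u w ∪ Y3 u w) ∪ Y1 u w) ∧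
    Disjoint (Y2 u w ∪ Y3 u w) (Y1 u w) ∧
    (∀ s ∈ Y2 u w ∪ Y3 u w,
      nbc (Y2 u w ∪ Y3 u w) s = 5 * m - 7 ∧ nbc (Y1 u w) s = m - 2) ∧
    (∀ s ∈ Y1 u w,
      nbc (Y2 u w ∪ Y3 u w) s = 3 * m ∧ nbc (Y1 u w) s = 3 * m - 9) := by
  have hA : (univ.image u).card = m := by
    rw [card_image_of_injective _ hu, card_univ, Fintype.card_fin]
  have hB : (univ.image w).card = m := by
    rw [card_image_of_injective _ hw, card_univ, Fintype.card_fin]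
  have hdisj : Disjoint (univ.image u) (univ.image w) := by
    rw [disjoint_left]
    intro x hx hx'
    obtain ⟨i, -, rfl⟩ := mem_image.mp hx
    obtain ⟨j, -, hj⟩ := mem_image.mp hx'
    exact huw i j hj.symm
  have hcov : (univ.image u) ∪ (univ.image w) = univ := by
    apply eq_univ_of_card
    rw [card_union_of_disjoint hdisj, hA, hB, Fintype.card_fin]
    ring
  have hcov' : (univ.image w) ∪ (univ.image u) = univ := by rw [union_comm]; exact hcov
  have hCE := cross_eq u w hu hw huw hcov
  have hY1 := Y1_eq u w
  have e1 : (univ.filter fun t : Finset (Fin (2*m)) =>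
        t.card = 3 ∧ ¬ t ⊆ univ.image u ∧ ¬ t ⊆ univ.image w)
      = univ.filter fun t => t.card = 3 ∧ ¬ t ⊆ univ.image w ∧ ¬ t ⊆ univ.image u :=
    filter_congr (fun t _ => by tauto)
  have e2 : (univ.filter fun t : Finset (Fin (2*m)) =>
        t.card = 3 ∧ (t ⊆ univ.image u ∨ t ⊆ univ.image w))
      = univ.filter fun t => t.card = 3 ∧ (t ⊆ univ.image w ∨ t ⊆ univ.image u) :=
    filter_congr (fun t _ => by tauto)
  refine ⟨?_, ?_, ?_, ?_⟩
  · intro s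
    rw [mem_union, hCE, hY1, mem_filter, mem_filter]
    constructor
    · intro h3
      by_cases h : s ⊆ univ.image u
      · exact Or.inr ⟨mem_univ s, h3, Or.inl h⟩
      by_cases h' : s ⊆ univ.image w
      · exact Or.inr ⟨mem_univ s, h3, Or.inr h'⟩
      · exact Or.inl ⟨mem_univ s, h3, h, h'⟩
    · rintro (⟨-, h3, -⟩ | ⟨-, h3, -⟩) <;> exact h3
  · rw [hCE, hY1, disjoint_left]
    intro s hs hs'
    obtain ⟨-, -, hnA, hnB⟩ := mem_filter.mp hs
    obtain ⟨-, -, h | h⟩ := mem_filter.mp hs' <;> tauto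
  · intro s hs
    rw [hCE] at hs
    rw [hCE, hY1]
    obtain ⟨-, h3, hnA, hnB⟩ := mem_filter.mp hs
    obtain ⟨a, b, c, hab, rfl, ⟨ha, hb, hc⟩ | ⟨ha, hb, hc⟩⟩ :=
      cross_decomp hcov h3 hnA hnB
    · exact ⟨nbc_cross_cross hdisj hcov hA hB rfl hm ha hb hc hab,
        nbc_Y1_cross hdisj hcov hA hB rfl hm ha hb hc hab⟩
    · rw [e1, e2]
      exact ⟨nbc_cross_cross hdisj.symm hcov' hB hA rfl hm ha hb hc hab,
        nbc_Y1_cross hdisj.symm hcov' hB hA rfl hm ha hb hc hab⟩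
  · intro s hs
    rw [hY1] at hs
    rw [hCE, hY1]
    obtain ⟨-, h3, hsA | hsB⟩ := mem_filter.mp hs
    · obtain ⟨a, b, c, hab, hac, hbc, rfl, ha, hb, hc⟩ := sub_decomp h3 hsA
      exact ⟨nbc_cross_Y1 hdisj hcov hA hB rfl hm ha hb hc hab hac hbc,
        nbc_Y1_Y1 hdisj hcov hA hB rfl hm ha hb hc hab hac hbc⟩
    · obtain ⟨a, b, c, hab, hac, hbc, rfl, ha, hb, hc⟩ := sub_decomp h3 hsB
      rw [e1, e2]
      exact ⟨nbc_cross_Y1 hdisj.symm hcov' hB hA rfl hm ha hb hc hab hac hbc,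
        nbc_Y1_Y1 hdisj.symm hcov' hB hA rfl hm ha hb hc hab hac hbc⟩
end

section
/- Let f be a λ_i(n,w)-eigenfunction of the Johnson graph J(n,w) and a, b distinct elements of [n]. Then the partial difference f_{ab} is either a λ_{i-1}(n-2, w-1)-eigenfunction of J(n-2, w-1) or the all-zeros function. -/
open Finset

/-- Decomposition of the neighbourhood sum at `insert a y` in `J(n,w)`:
neighbours containing `a` but not `b` biject with the `z`'s, the unique
neighbour containing `b` but not `a` is `insert b y`, and the rest form a
set symmetric in `a` and `b`. -/
lemma stmt8_decomp {n w : ℕ} (hw : 1 ≤ w) (g : Finset (Fin n) → ℝ)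
    (a b : Fin n) (hab : a ≠ b) (y : Finset (Fin n))
    (hy : y.card = w - 1) (hay : a ∉ y) (hby : b ∉ y) :
    (∑ x ∈ Finset.univ.filter
        (fun x : Finset (Fin n) => x.card = w ∧ ((insert a y) ∩ x).card = w - 1 ∧ x ≠ insert a y),
        g x)
      = (∑ z ∈ Finset.univ.filter
           (fun z : Finset (Fin n) => z.card = w - 1 ∧ a ∉ z ∧ b ∉ z ∧
             (y ∩ z).card = w - 2 ∧ z ≠ y),
           g (insert a z))
        + g (insert b y)
        + ∑ x ∈ Finset.univ.filter
            (fun x : Finset (Fin n) => x.card = w ∧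
              ((a ∈ x ∧ b ∈ x ∧ (y ∩ x).card = w - 2) ∨ (a ∉ x ∧ b ∉ x ∧ y ⊆ x))),
            g x := by
  classical
  set Z := Finset.univ.filter (fun z : Finset (Fin n) => z.card = w - 1 ∧ a ∉ z ∧ b ∉ z ∧
    (y ∩ z).card = w - 2 ∧ z ≠ y) with hZ
  set C := Finset.univ.filter (fun x : Finset (Fin n) => x.card = w ∧
    ((a ∈ x ∧ b ∈ x ∧ (y ∩ x).card = w - 2) ∨ (a ∉ x ∧ b ∉ x ∧ y ⊆ x))) with hC
  have hayx : ∀ x : Finset (Fin n), a ∉ y ∩ x := fun x h => hay (mem_of_mem_inter_left h)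
  have key : Finset.univ.filter
      (fun x : Finset (Fin n) => x.card = w ∧ ((insert a y) ∩ x).card = w - 1 ∧ x ≠ insert a y)
      = Z.image (insert a) ∪ ({insert b y} ∪ C) := by
    ext x
    simp only [hZ, hC, mem_filter, mem_univ, true_and, mem_union, mem_image, mem_singleton]
    constructor
    · rintro ⟨hxc, hxi, hxne⟩
      by_cases hax : a ∈ x
      · rw [Finset.insert_inter_of_mem hax,
          Finset.card_insert_of_notMem (hayx x)] at hxi
        by_cases hbx : b ∈ x
        · right; right
          exact ⟨hxc, Or.inl ⟨hax, hbx, by omega⟩⟩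
        · left
          refine ⟨x.erase a, ⟨?_, Finset.notMem_erase a x, ?_, ?_, ?_⟩, ?_⟩
          · rw [Finset.card_erase_of_mem hax, hxc]
          · exact fun h => hbx (Finset.mem_of_mem_erase h)
          · rw [Finset.inter_erase, Finset.erase_eq_of_notMem (hayx x)]; omega
          · intro h
            apply hxne
            rw [← Finset.insert_erase hax, h]
          · exact Finset.insert_erase hax
      · rw [Finset.insert_inter_of_notMem hax] at hxi
        have hyx : y ⊆ x := by
          have h2 : y ∩ x = y :=
            Finset.eq_of_subset_of_card_le Finset.inter_subset_left (by omega)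
          rw [← h2]; exact Finset.inter_subset_right
        by_cases hbx : b ∈ x
        · right; left
          have hsub : insert b y ⊆ x := Finset.insert_subset hbx hyx
          refine (Finset.eq_of_subset_of_card_le hsub ?_).symm
          rw [Finset.card_insert_of_notMem hby, hxc, hy]; omega
        · right; right
          exact ⟨hxc, Or.inr ⟨hax, hbx, hyx⟩⟩
    · rintro (⟨z, ⟨hzc, haz, hbz, hyz, hzy⟩, rfl⟩ | rfl | ⟨hxc, h⟩)
      · have hw2 : 2 ≤ w := by
          rcases Nat.lt_or_ge w 2 with h | h
          · exfalso
            apply hzy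
            have : w - 1 = 0 := by omega
            rw [this] at hzc hy
            rw [Finset.card_eq_zero] at hzc hy
            rw [hzc, hy]
          · exact h
        refine ⟨?_, ?_, ?_⟩
        · rw [Finset.card_insert_of_notMem haz, hzc]; omega
        · rw [Finset.insert_inter_of_mem (Finset.mem_insert_self a z),
            Finset.inter_insert_of_notMem hay,
            Finset.card_insert_of_notMem (hayx z), hyz]
          omega
        · intro h
          apply hzy
          have := congrArg (Finset.erase · a) h
          simpa [Finset.erase_insert haz, Finset.erase_insert hay] using this
      · refine ⟨?_, ?_, ?_⟩
        · rw [Finset.card_insert_of_notMem hby, hy]; omega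
        · have hanb : a ∉ insert b y := by
            simp only [Finset.mem_insert]
            rintro (h | h)
            · exact hab h
            · exact hay h
          rw [Finset.insert_inter_of_notMem hanb,
            Finset.inter_eq_left.mpr (Finset.subset_insert b y), hy]
        · intro h
          have : b ∈ insert a y := h ▸ Finset.mem_insert_self b y
          simp only [Finset.mem_insert] at this
          rcases this with h' | h'
          · exact hab h'.symm
          · exact hby h'
      · rcases h with ⟨hax, hbx, hyxc⟩ | ⟨hax, hbx, hyx⟩
        · have hw2 : 2 ≤ w := by
            have := Finset.one_lt_card.mpr ⟨a, hax, b, hbx, hab⟩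
            omega
          refine ⟨hxc, ?_, ?_⟩
          · rw [Finset.insert_inter_of_mem hax,
              Finset.card_insert_of_notMem (hayx x), hyxc]
            omega
          · intro h
            rw [h] at hbx
            simp only [Finset.mem_insert] at hbx
            rcases hbx with h' | h'
            · exact hab h'.symm
            · exact hby h'
        · refine ⟨hxc, ?_, ?_⟩
          · rw [Finset.insert_inter_of_notMem hax, Finset.inter_eq_left.mpr hyx, hy]
          · intro h
            rw [h] at hax
            exact hax (Finset.mem_insert_self a y)
  rw [key]
  have hd2 : Disjoint ({insert b y} : Finset (Finset (Fin n))) C := by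
    rw [Finset.disjoint_left]
    intro x hx
    simp only [Finset.mem_singleton] at hx
    subst hx
    simp only [hC, mem_filter, mem_univ, true_and, not_and, not_or]
    refine fun _ => ⟨fun hax => ?_, fun _ hbx' => ?_⟩
    · exfalso
      simp only [Finset.mem_insert] at hax
      rcases hax with h' | h'
      · exact hab h'
      · exact hay h'
    · exact (hbx' (Finset.mem_insert_self b y)).elim
  have hd1 : Disjoint (Z.image (insert a)) ({insert b y} ∪ C) := by
    rw [Finset.disjoint_left]
    intro x hx
    simp only [Finset.mem_image, hZ, mem_filter, mem_univ, true_and] at hx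
    obtain ⟨z, ⟨hzc, haz, hbz, hyz, hzy⟩, rfl⟩ := hx
    have hax : a ∈ insert a z := Finset.mem_insert_self a z
    have hbx : b ∉ insert a z := by
      simp only [Finset.mem_insert]
      rintro (h | h)
      · exact hab h.symm
      · exact hbz h
    simp only [Finset.mem_union, Finset.mem_singleton, hC, mem_filter, mem_univ, true_and,
      not_or, not_and]
    constructor
    · intro h
      exact hbx (h ▸ Finset.mem_insert_self b y)
    · refine fun _ => ⟨fun _ hbx' => ?_, fun hax' => ?_⟩
      · exact (hbx hbx').elim
      · exact (hax' hax).elim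
  rw [Finset.sum_union hd1, Finset.sum_union hd2, Finset.sum_singleton]
  have hinj : ∀ z1 ∈ Z, ∀ z2 ∈ Z, insert a z1 = insert a z2 → z1 = z2 := by
    intro z1 h1 z2 h2 h
    simp only [hZ, mem_filter, mem_univ, true_and] at h1 h2
    have := congrArg (Finset.erase · a) h
    simpa [Finset.erase_insert h1.2.1, Finset.erase_insert h2.2.1] using this
  rw [Finset.sum_image hinj, add_assoc]

/-- If `f` is a `λ_i(n,w)`-eigenfunction of `J(n,w)` and `a ≠ b`,
then the partial difference `f_{ab}` is either the all-zeros function or a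
`λ_{i-1}(n-2,w-1)`-eigenfunction of `J(n-2,w-1)` (realised on the
`(w-1)`-subsets of `[n] \ {a,b}`, adjacent iff they intersect in `w-2`
elements).  Here `λ_i(n,w) = (w-i)(n-w-i) - i` and
`λ_{i-1}(n-2,w-1) = (w-i)(n-w-i) - (i-1)`. -/
theorem stmt8 (n w i : ℕ) (hw : 1 ≤ w) (hi : 1 ≤ i) (hiw : i ≤ w)
    (hnw : w + 2 ≤ n)
    (f : Finset (Fin n) → ℝ)
    (heig : ∀ x : Finset (Fin n), x.card = w →
      (((w : ℝ) - i) * ((n : ℝ) - w - i) - i) * f x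
        = ∑ y ∈ Finset.univ.filter
            (fun y : Finset (Fin n) => y.card = w ∧ (x ∩ y).card = w - 1 ∧ y ≠ x),
            f y)
    (hne : ∃ x : Finset (Fin n), x.card = w ∧ f x ≠ 0)
    (a b : Fin n) (hab : a ≠ b) :
    (∀ y : Finset (Fin n), y.card = w - 1 → a ∉ y → b ∉ y →
        f (insert a y) - f (insert b y) = 0) ∨
    ((∀ y : Finset (Fin n), y.card = w - 1 → a ∉ y → b ∉ y →
        (((w : ℝ) - i) * ((n : ℝ) - w - i) - ((i : ℝ) - 1))
            * (f (insert a y) - f (insert b y))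
          = ∑ z ∈ Finset.univ.filter
              (fun z : Finset (Fin n) => z.card = w - 1 ∧ a ∉ z ∧ b ∉ z ∧
                (y ∩ z).card = w - 2 ∧ z ≠ y),
              (f (insert a z) - f (insert b z))) ∧
      ∃ y : Finset (Fin n), y.card = w - 1 ∧ a ∉ y ∧ b ∉ y ∧
        f (insert a y) - f (insert b y) ≠ 0) := by
  classical
  by_cases hz : ∀ y : Finset (Fin n), y.card = w - 1 → a ∉ y → b ∉ y →
      f (insert a y) - f (insert b y) = 0
  · exact Or.inl hz
  · right
    constructor
    · intro y hy hay hby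
      have hA : (insert a y).card = w := by
        rw [Finset.card_insert_of_notMem hay, hy]; omega
      have hB : (insert b y).card = w := by
        rw [Finset.card_insert_of_notMem hby, hy]; omega
      have eqA := heig _ hA
      have eqB := heig _ hB
      rw [stmt8_decomp hw f a b hab y hy hay hby] at eqA
      rw [stmt8_decomp hw f b a hab.symm y hy hby hay] at eqB
      rw [show (Finset.univ.filter (fun z : Finset (Fin n) => z.card = w - 1 ∧ b ∉ z ∧ a ∉ z ∧
            (y ∩ z).card = w - 2 ∧ z ≠ y))
          = (Finset.univ.filter (fun z : Finset (Fin n) => z.card = w - 1 ∧ a ∉ z ∧ b ∉ z ∧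
            (y ∩ z).card = w - 2 ∧ z ≠ y)) from by
          ext x; simp only [mem_filter, mem_univ, true_and]; tauto,
        show (Finset.univ.filter (fun x : Finset (Fin n) => x.card = w ∧
            ((b ∈ x ∧ a ∈ x ∧ (y ∩ x).card = w - 2) ∨ (b ∉ x ∧ a ∉ x ∧ y ⊆ x))))
          = (Finset.univ.filter (fun x : Finset (Fin n) => x.card = w ∧
            ((a ∈ x ∧ b ∈ x ∧ (y ∩ x).card = w - 2) ∨ (a ∉ x ∧ b ∉ x ∧ y ⊆ x)))) from by
          ext x; simp only [mem_filter, mem_univ, true_and]; tauto] at eqB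
      rw [Finset.sum_sub_distrib]
      linear_combination eqA - eqB
    · push_neg at hz
      obtain ⟨y, h1, h2, h3, h4⟩ := hz
      exact ⟨y, h1, h2, h3, h4⟩
end

section
/- Let n ≥ 5 and f be a λ₁(n,2)-eigenfunction of J(n,2) taking values only in {-1, 0, 1}, with f not identically zero. Then either (1) there exist distinct a, b ∈ [n] with f(x) = 1 if a ∈ x, b ∉ x; f(x) = -1 if b ∈ x, a ∉ x; and f(x) = 0 otherwise; or (2) n is even and there exists a partition [n] = M₁ ∪ M₂ with |M₁| = |M₂| = n/2 such that f(x) = 1 if x ⊆ M₁, f(x) = -1 if x ⊆ M₂, and f(x) = 0 otherwise. -/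
open Finset

lemma pair_inter_card_one {n : ℕ} (i j : Fin n) (hij : i ≠ j) (y : Finset (Fin n)) :
    (({i,j} : Finset (Fin n)) ∩ y).card = 1 ↔ (i ∈ y ∧ j ∉ y) ∨ (j ∈ y ∧ i ∉ y) := by
  constructor
  · intro h
    by_cases hi : i ∈ y <;> by_cases hj : j ∈ y
    · exfalso
      have he : ({i,j} : Finset (Fin n)) ∩ y = {i,j} := by
        apply inter_eq_left.mpr
        intro a ha
        simp only [mem_insert, mem_singleton] at ha
        rcases ha with rfl|rfl <;> assumption
      rw [he, card_insert_of_notMem (by simp [hij]), card_singleton] at h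
      omega
    · exact Or.inl ⟨hi, hj⟩
    · exact Or.inr ⟨hj, hi⟩
    · exfalso
      have he : ({i,j} : Finset (Fin n)) ∩ y = ∅ := by
        ext a
        simp only [mem_inter, mem_insert, mem_singleton, notMem_empty, iff_false, not_and]
        rintro (rfl|rfl) <;> assumption
      rw [he] at h; simp at h
  · rintro (⟨hi, hj⟩|⟨hj, hi⟩)
    · have he : ({i,j} : Finset (Fin n)) ∩ y = {i} := by
        ext a
        simp only [mem_inter, mem_insert, mem_singleton]
        constructor
        · rintro ⟨rfl|rfl, h⟩
          · rfl
          · exact absurd h hj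
        · rintro rfl; exact ⟨Or.inl rfl, hi⟩
      rw [he]; simp
    · have he : ({i,j} : Finset (Fin n)) ∩ y = {j} := by
        ext a
        simp only [mem_inter, mem_insert, mem_singleton]
        constructor
        · rintro ⟨rfl|rfl, h⟩
          · exact absurd h hi
          · rfl
        · rintro rfl; exact ⟨Or.inr rfl, hj⟩
      rw [he]; simp

lemma nbr_sum {n : ℕ} (f : Finset (Fin n) → ℝ) (i j : Fin n) (hij : i ≠ j) :
    ∑ y ∈ Finset.univ.filter
        (fun y : Finset (Fin n) => y.card = 2 ∧ (({i,j} : Finset (Fin n)) ∩ y).card = 1), f y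
    = (∑ k ∈ ({i,j} : Finset (Fin n))ᶜ, f {i,k}) + ∑ k ∈ ({i,j} : Finset (Fin n))ᶜ, f {j,k} := by
  have hset : Finset.univ.filter
      (fun y : Finset (Fin n) => y.card = 2 ∧ (({i,j} : Finset (Fin n)) ∩ y).card = 1)
      = ((({i,j} : Finset (Fin n))ᶜ).image fun k => ({i,k} : Finset (Fin n)))
        ∪ ((({i,j} : Finset (Fin n))ᶜ).image fun k => ({j,k} : Finset (Fin n))) := by
    ext y
    simp only [mem_filter, mem_univ, true_and, mem_union, mem_image, mem_compl, mem_insert,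
      mem_singleton, not_or]
    constructor
    · rintro ⟨hc, h1⟩
      rw [pair_inter_card_one i j hij] at h1
      rcases h1 with ⟨hi, hj⟩ | ⟨hj, hi⟩
      · obtain ⟨u, v, huv, rfl⟩ := card_eq_two.mp hc
        simp only [mem_insert, mem_singleton, not_or] at hi hj
        left
        rcases hi with rfl | rfl
        · exact ⟨v, ⟨fun h => huv h.symm, fun h => hj.2 h.symm⟩, rfl⟩
        · exact ⟨u, ⟨fun h => huv h, fun h => hj.1 h.symm⟩, (pair_comm u i).symm⟩
      · obtain ⟨u, v, huv, rfl⟩ := card_eq_two.mp hc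
        simp only [mem_insert, mem_singleton, not_or] at hi hj
        right
        rcases hj with rfl | rfl
        · exact ⟨v, ⟨fun h => hi.2 h.symm, fun h => huv h.symm⟩, rfl⟩
        · exact ⟨u, ⟨fun h => hi.1 h.symm, fun h => huv h⟩, (pair_comm u j).symm⟩
    · rintro (⟨k, ⟨hki, hkj⟩, rfl⟩ | ⟨k, ⟨hki, hkj⟩, rfl⟩)
      · refine ⟨card_eq_two.mpr ⟨i, k, fun h => hki h.symm, rfl⟩, ?_⟩
        rw [pair_inter_card_one i j hij]
        exact Or.inl ⟨mem_insert_self i {k}, by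
          simp only [mem_insert, mem_singleton, not_or]
          exact ⟨hij.symm, fun h => hkj h.symm⟩⟩
      · refine ⟨card_eq_two.mpr ⟨j, k, fun h => hkj h.symm, rfl⟩, ?_⟩
        rw [pair_inter_card_one i j hij]
        exact Or.inr ⟨mem_insert_self j {k}, by
          simp only [mem_insert, mem_singleton, not_or]
          exact ⟨hij, fun h => hki h.symm⟩⟩
  have hdis : Disjoint ((({i,j} : Finset (Fin n))ᶜ).image fun k => ({i,k} : Finset (Fin n)))
      ((({i,j} : Finset (Fin n))ᶜ).image fun k => ({j,k} : Finset (Fin n))) := by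
    rw [Finset.disjoint_left]
    rintro y hy1 hy2
    simp only [mem_image, mem_compl, mem_insert, mem_singleton, not_or] at hy1 hy2
    obtain ⟨k, ⟨hki, hkj⟩, rfl⟩ := hy1
    obtain ⟨l, ⟨hli, hlj⟩, he⟩ := hy2
    have : j ∈ ({i, k} : Finset (Fin n)) := he ▸ mem_insert_self j {l}
    simp only [mem_insert, mem_singleton] at this
    rcases this with rfl | rfl
    · exact hij rfl
    · exact hkj rfl
  have hinj1 : ∀ a ∈ ({i,j} : Finset (Fin n))ᶜ, ∀ b ∈ ({i,j} : Finset (Fin n))ᶜ,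
      ({i,a} : Finset (Fin n)) = {i,b} → a = b := by
    intro a ha b hb h
    simp only [mem_compl, mem_insert, mem_singleton, not_or] at ha hb
    have : a ∈ ({i, b} : Finset (Fin n)) := h ▸ mem_insert_of_mem (mem_singleton_self a)
    simp only [mem_insert, mem_singleton] at this
    rcases this with rfl | rfl
    · exact absurd rfl ha.1
    · rfl
  have hinj2 : ∀ a ∈ ({i,j} : Finset (Fin n))ᶜ, ∀ b ∈ ({i,j} : Finset (Fin n))ᶜ,
      ({j,a} : Finset (Fin n)) = {j,b} → a = b := by
    intro a ha b hb h
    simp only [mem_compl, mem_insert, mem_singleton, not_or] at ha hb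
    have : a ∈ ({j, b} : Finset (Fin n)) := h ▸ mem_insert_of_mem (mem_singleton_self a)
    simp only [mem_insert, mem_singleton] at this
    rcases this with rfl | rfl
    · exact absurd rfl ha.2
    · rfl
  rw [hset, sum_union hdis, sum_image hinj1, sum_image hinj2]

set_option maxHeartbeats 2000000 in
/-- A `λ₁(n,2) = (n-4)`-eigenfunction of `J(n,2)` (`n ≥ 5`) taking
values only in `{-1, 0, 1}` and not identically zero is either of type 1
(determined by two distinct defining elements `a, b`) or of type 2 (determined
by an equipartition `[n] = M₁ ∪ M₂`, so `n` is even). -/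
theorem stmt9 (n : ℕ) (hn : 5 ≤ n) (f : Finset (Fin n) → ℝ)
    (heig : ∀ x : Finset (Fin n), x.card = 2 →
      ((n : ℝ) - 4) * f x
        = ∑ y ∈ Finset.univ.filter
            (fun y : Finset (Fin n) => y.card = 2 ∧ (x ∩ y).card = 1), f y)
    (hval : ∀ x : Finset (Fin n), x.card = 2 → f x = -1 ∨ f x = 0 ∨ f x = 1)
    (hne : ∃ x : Finset (Fin n), x.card = 2 ∧ f x ≠ 0) :
    (∃ a b : Fin n, a ≠ b ∧ ∀ x : Finset (Fin n), x.card = 2 →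
        f x = if a ∈ x ∧ b ∉ x then 1 else if b ∈ x ∧ a ∉ x then -1 else 0) ∨
    (∃ M1 M2 : Finset (Fin n), Disjoint M1 M2 ∧ M1 ∪ M2 = Finset.univ ∧
        M1.card = M2.card ∧ 2 * M1.card = n ∧
        ∀ x : Finset (Fin n), x.card = 2 →
          f x = if x ⊆ M1 then 1 else if x ⊆ M2 then -1 else 0) := by
  have hcard2 : ∀ i j : Fin n, i ≠ j → ({i,j} : Finset (Fin n)).card = 2 := by
    intro i j hij
    rw [card_insert_of_notMem (by simp [hij]), card_singleton]
  set g : Fin n → ℝ := fun i => ∑ k ∈ ({i} : Finset (Fin n))ᶜ, f {i,k} with hg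
  have hcompl : ∀ i j : Fin n, i ≠ j →
      ({i} : Finset (Fin n))ᶜ = insert j (({i,j} : Finset (Fin n))ᶜ) := by
    intro i j hij
    ext a
    simp only [mem_compl, mem_singleton, mem_insert, not_or]
    constructor
    · intro h
      by_cases ha : a = j
      · exact Or.inl ha
      · exact Or.inr ⟨h, ha⟩
    · rintro (rfl | ⟨h, _⟩)
      · exact hij.symm
      · exact h
  have hsplit : ∀ i j : Fin n, i ≠ j →
      ∑ k ∈ ({i,j} : Finset (Fin n))ᶜ, f {i,k} = g i - f {i,j} := by
    intro i j hij
    have : g i = f {i,j} + ∑ k ∈ ({i,j} : Finset (Fin n))ᶜ, f {i,k} := by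
      rw [hg]
      simp only
      rw [hcompl i j hij, sum_insert (by simp)]
    linarith
  have key : ∀ i j : Fin n, i ≠ j → ((n:ℝ) - 2) * f {i,j} = g i + g j := by
    intro i j hij
    have h := heig {i,j} (hcard2 i j hij)
    rw [nbr_sum f i j hij, hsplit i j hij] at h
    have h2 : ∑ k ∈ ({i,j} : Finset (Fin n))ᶜ, f {j,k} = g j - f {i,j} := by
      have hps : ({i,j} : Finset (Fin n)) = {j,i} := pair_comm i j
      rw [hps, hsplit j i hij.symm, pair_comm j i]
    rw [h2] at h
    ring_nf
    ring_nf at h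
    linarith
  have hn2 : (n:ℝ) - 2 ≠ 0 := by
    have : (5:ℝ) ≤ n := by exact_mod_cast hn
    linarith
  set σ : Fin n → ℝ := fun i => g i / ((n:ℝ) - 2) with hσdef
  have hfσ : ∀ i j : Fin n, i ≠ j → f {i,j} = σ i + σ j := by
    intro i j hij
    have h := key i j hij
    rw [hσdef]
    simp only
    field_simp
    linarith
  have hT : ∑ i : Fin n, σ i = 0 := by
    have hi0 : (⟨0, by omega⟩ : Fin n) = (⟨0, by omega⟩ : Fin n) := rfl
    set i : Fin n := ⟨0, by omega⟩
    have hgi : g i = ((n:ℝ) - 2) * σ i := by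
      rw [hσdef]; field_simp
    have hgi2 : g i = ((n:ℝ) - 2) * σ i + ∑ k : Fin n, σ k := by
      rw [hg]
      simp only
      have : ∀ k ∈ ({i} : Finset (Fin n))ᶜ, f {i,k} = σ i + σ k := by
        intro k hk
        simp only [mem_compl, mem_singleton] at hk
        exact hfσ i k (fun h => hk h.symm)
      rw [sum_congr rfl this, sum_add_distrib, sum_const, card_compl, card_singleton,
        Fintype.card_fin]
      have huniv : ∑ k : Fin n, σ k = σ i + ∑ k ∈ ({i} : Finset (Fin n))ᶜ, σ k := by
        rw [← sum_insert (by simp : i ∉ ({i} : Finset (Fin n))ᶜ)]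
        congr 1
        ext a
        simp only [mem_insert, mem_compl, mem_singleton, mem_univ, iff_true]
        tauto
      have hcast : ((n - 1 : ℕ) : ℝ) = (n:ℝ) - 1 := by
        have : (1:ℕ) ≤ n := by omega
        push_cast [this]
        ring
      rw [nsmul_eq_mul, hcast]
      linarith [huniv]
    linarith [hgi, hgi2]
  have hsum : ∀ i j : Fin n, i ≠ j → σ i + σ j = -1 ∨ σ i + σ j = 0 ∨ σ i + σ j = 1 := by
    intro i j hij
    have := hval {i,j} (hcard2 i j hij)
    rw [hfσ i j hij] at this
    exact this
  -- a nonzero value exists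
  have hex : ∃ p : Fin n, σ p ≠ 0 := by
    obtain ⟨x, hx2, hfx⟩ := hne
    obtain ⟨i, j, hij, rfl⟩ := card_eq_two.mp hx2
    rw [hfσ i j hij] at hfx
    by_contra hc
    push_neg at hc
    rw [hc i, hc j] at hfx
    exact hfx (by ring)
  have hpos : ∃ a : Fin n, 0 < σ a := by
    by_contra hc
    push_neg at hc
    obtain ⟨p, hp⟩ := hex
    have : ∑ i : Fin n, σ i < ∑ _i : Fin n, (0:ℝ) :=
      Finset.sum_lt_sum (fun i _ => hc i) ⟨p, mem_univ p, lt_of_le_of_ne (hc p) hp⟩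
    simp at this
    linarith [hT]
  have hneg : ∃ b : Fin n, σ b < 0 := by
    by_contra hc
    push_neg at hc
    obtain ⟨p, hp⟩ := hex
    have : ∑ _i : Fin n, (0:ℝ) < ∑ i : Fin n, σ i :=
      Finset.sum_lt_sum (fun i _ => hc i) ⟨p, mem_univ p, lt_of_le_of_ne (hc p) (Ne.symm hp)⟩
    simp at this
    linarith [hT]
  obtain ⟨a, ha⟩ := hpos
  obtain ⟨b, hb⟩ := hneg
  have hab : a ≠ b := fun h => by rw [h] at ha; linarith
  have pick2 : ∀ s : Finset (Fin n), s.card + 2 ≤ n → ∃ j k : Fin n, j ≠ k ∧ j ∉ s ∧ k ∉ s := by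
    intro s hs
    have h1 : 1 < sᶜ.card := by
      rw [card_compl, Fintype.card_fin]
      omega
    obtain ⟨j, hj, k, hk, hjk⟩ := Finset.one_lt_card.mp h1
    exact ⟨j, k, hjk, mem_compl.mp hj, mem_compl.mp hk⟩
  have pick2' : ∀ u v : Fin n, ∃ j k : Fin n, j ≠ k ∧ j ≠ u ∧ j ≠ v ∧ k ≠ u ∧ k ≠ v := by
    intro u v
    obtain ⟨j, k, hjk, hj, hk⟩ := pick2 {u, v} (by
      have h1 := card_insert_le u ({v} : Finset (Fin n))
      have h2 : ({v} : Finset (Fin n)).card = 1 := card_singleton v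
      omega)
    simp only [mem_insert, mem_singleton, not_or] at hj hk
    exact ⟨j, k, hjk, hj.1, hj.2, hk.1, hk.2⟩
  by_cases hZ : ∃ z : Fin n, σ z = 0
  · -- type 1
    obtain ⟨z, hz⟩ := hZ
    have haz : a ≠ z := fun h => by rw [h, hz] at ha; linarith
    have hbz : b ≠ z := fun h => by rw [h, hz] at hb; linarith
    have ha1 : σ a = 1 := by
      rcases hsum a z haz with h | h | h <;> rw [hz] at h <;> linarith
    have hb1 : σ b = -1 := by
      rcases hsum b z hbz with h | h | h <;> rw [hz] at h <;> linarith
    have hzero : ∀ i : Fin n, i ≠ a → i ≠ b → σ i = 0 := by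
      intro i hia hib
      by_cases hiz : i = z
      · rw [hiz]; exact hz
      have hi3 : σ i = -1 ∨ σ i = 0 ∨ σ i = 1 := by
        rcases hsum i z hiz with h | h | h <;> rw [hz] at h <;>
          [exact Or.inl (by linarith); exact Or.inr (Or.inl (by linarith));
           exact Or.inr (Or.inr (by linarith))]
      rcases hi3 with h | h | h
      · exfalso
        rcases hsum b i (Ne.symm hib) with h2 | h2 | h2 <;> linarith
      · exact h
      · exfalso
        rcases hsum a i (Ne.symm hia) with h2 | h2 | h2 <;> linarith
    have hσif : ∀ i : Fin n, σ i = if a = i then 1 else if b = i then -1 else 0 := by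
      intro i
      split_ifs with h1 h2
      · rw [← h1]; exact ha1
      · rw [← h2]; exact hb1
      · exact hzero i (fun h => h1 h.symm) (fun h => h2 h.symm)
    left
    refine ⟨a, b, hab, ?_⟩
    intro x hx2
    obtain ⟨i, j, hij, rfl⟩ := card_eq_two.mp hx2
    rw [hfσ i j hij, hσif i, hσif j]
    simp only [mem_insert, mem_singleton]
    by_cases hai : a = i <;> by_cases haj : a = j <;> by_cases hbi : b = i <;>
      by_cases hbj : b = j <;> simp_all
  · -- type 2
    push_neg at hZ
    have htri : ∀ i : Fin n, 0 < σ i ∨ σ i < 0 := by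
      intro i
      rcases lt_trichotomy (σ i) 0 with h | h | h
      · exact Or.inr h
      · exact absurd h (hZ i)
      · exact Or.inl h
    set A : Finset (Fin n) := univ.filter (fun i => 0 < σ i) with hA
    set B : Finset (Fin n) := univ.filter (fun i => σ i < 0) with hB
    have hmemA : ∀ i : Fin n, i ∈ A ↔ 0 < σ i := by intro i; simp [hA]
    have hmemB : ∀ i : Fin n, i ∈ B ↔ σ i < 0 := by intro i; simp [hB]
    have hposs : ∀ i j : Fin n, i ≠ j → 0 < σ i → 0 < σ j → σ i + σ j = 1 := by
      intro i j hij h1 h2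
      rcases hsum i j hij with h | h | h <;> linarith
    have hnegs : ∀ i j : Fin n, i ≠ j → σ i < 0 → σ j < 0 → σ i + σ j = -1 := by
      intro i j hij h1 h2
      rcases hsum i j hij with h | h | h <;> linarith
    -- |A| ≥ 2
    have hA2 : 1 < A.card := by
      by_contra hc
      push_neg at hc
      have hAa : A = {a} := by
        apply Finset.eq_singleton_iff_unique_mem.mpr
        refine ⟨(hmemA a).mpr ha, ?_⟩
        intro x hx
        by_contra hxa
        have : 1 < A.card := Finset.one_lt_card.mpr ⟨x, hx, a, (hmemA a).mpr ha, hxa⟩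
        omega
      -- all i ≠ a are negative, and equal -1/2
      have hneg' : ∀ i : Fin n, i ≠ a → σ i < 0 := by
        intro i hia
        rcases htri i with h | h
        · exfalso
          have : i ∈ A := (hmemA i).mpr h
          rw [hAa, mem_singleton] at this
          exact hia this
        · exact h
      have hhalf : ∀ i : Fin n, i ≠ a → σ i = -1/2 := by
        intro i hia
        obtain ⟨j, k, hjk, hji, hja, hki, hka⟩ := pick2' i a
        have h1 := hnegs i j (Ne.symm hji) (hneg' i hia) (hneg' j hja)
        have h2 := hnegs i k (Ne.symm hki) (hneg' i hia) (hneg' k hka)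
        have h3 := hnegs j k hjk (hneg' j hja) (hneg' k hka)
        linarith
      -- sum: σ a = (n-1)/2
      have hsuma : σ a = ((n:ℝ) - 1) / 2 := by
        have huniv : (0:ℝ) = σ a + ∑ k ∈ ({a} : Finset (Fin n))ᶜ, σ k := by
          rw [← hT, ← sum_insert (by simp : a ∉ ({a} : Finset (Fin n))ᶜ)]
          congr 1
          ext x
          simp only [mem_insert, mem_compl, mem_singleton, mem_univ, iff_true]
          tauto
        have hcs : ∑ k ∈ ({a} : Finset (Fin n))ᶜ, σ k = ((n:ℝ) - 1) * (-1/2) := by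
          rw [sum_congr rfl (fun k hk => hhalf k (by simpa using hk)), sum_const,
            card_compl, card_singleton, Fintype.card_fin, nsmul_eq_mul]
          have hcast : ((n - 1 : ℕ) : ℝ) = (n:ℝ) - 1 := by
            have : (1:ℕ) ≤ n := by omega
            push_cast [this]; ring
          rw [hcast]
        rw [hcs] at huniv
        linarith
      -- contradiction: σ a + σ b ≤ 1 but σ a ≥ 2, σ b = -1/2
      have hb2 : σ b = -1/2 := hhalf b (Ne.symm hab)
      have h5 : (5:ℝ) ≤ n := by exact_mod_cast hn
      rcases hsum a b hab with h | h | h <;> rw [hsuma, hb2] at h <;> linarith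
    have hB2 : 1 < B.card := by
      by_contra hc
      push_neg at hc
      have hBb : B = {b} := by
        apply Finset.eq_singleton_iff_unique_mem.mpr
        refine ⟨(hmemB b).mpr hb, ?_⟩
        intro x hx
        by_contra hxb
        have : 1 < B.card := Finset.one_lt_card.mpr ⟨x, hx, b, (hmemB b).mpr hb, hxb⟩
        omega
      have hpos' : ∀ i : Fin n, i ≠ b → 0 < σ i := by
        intro i hib
        rcases htri i with h | h
        · exact h
        · exfalso
          have : i ∈ B := (hmemB i).mpr h
          rw [hBb, mem_singleton] at this
          exact hib this
      have hhalf : ∀ i : Fin n, i ≠ b → σ i = 1/2 := by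
        intro i hib
        obtain ⟨j, k, hjk, hji, hjb, hki, hkb⟩ := pick2' i b
        have h1 := hposs i j (Ne.symm hji) (hpos' i hib) (hpos' j hjb)
        have h2 := hposs i k (Ne.symm hki) (hpos' i hib) (hpos' k hkb)
        have h3 := hposs j k hjk (hpos' j hjb) (hpos' k hkb)
        linarith
      have hsumb : σ b = -((n:ℝ) - 1) / 2 := by
        have huniv : (0:ℝ) = σ b + ∑ k ∈ ({b} : Finset (Fin n))ᶜ, σ k := by
          rw [← hT, ← sum_insert (by simp : b ∉ ({b} : Finset (Fin n))ᶜ)]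
          congr 1
          ext x
          simp only [mem_insert, mem_compl, mem_singleton, mem_univ, iff_true]
          tauto
        have hcs : ∑ k ∈ ({b} : Finset (Fin n))ᶜ, σ k = ((n:ℝ) - 1) * (1/2) := by
          rw [sum_congr rfl (fun k hk => hhalf k (by simpa using hk)), sum_const,
            card_compl, card_singleton, Fintype.card_fin, nsmul_eq_mul]
          have hcast : ((n - 1 : ℕ) : ℝ) = (n:ℝ) - 1 := by
            have : (1:ℕ) ≤ n := by omega
            push_cast [this]; ring
          rw [hcast]
        rw [hcs] at huniv
        linarith
      have ha2 : σ a = 1/2 := hhalf a hab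
      have h5 : (5:ℝ) ≤ n := by exact_mod_cast hn
      rcases hsum a b hab with h | h | h <;> rw [hsumb, ha2] at h <;> linarith
    -- every positive is 1/2, every negative is -1/2
    have hmate : ∀ (s : Finset (Fin n)), 1 < s.card → ∀ i : Fin n, ∃ j ∈ s, j ≠ i := by
      intro s hs i
      obtain ⟨u, hu, v, hv, huv⟩ := Finset.one_lt_card.mp hs
      by_cases hui : u = i
      · exact ⟨v, hv, fun h => huv (hui.trans h.symm)⟩
      · exact ⟨u, hu, hui⟩
    have hhalfpos : ∀ i : Fin n, 0 < σ i → σ i = 1/2 := by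
      intro i hi
      obtain ⟨j, hj, hji⟩ := hmate A hA2 i
      rw [hmemA] at hj
      have hlt1 : σ i < 1 := by
        have := hposs i j (Ne.symm hji) hi hj
        linarith
      obtain ⟨u, hu, ui⟩ := hmate B hB2 i
      obtain ⟨v, hv⟩ : (B.erase u).Nonempty := by
        rw [← Finset.card_pos, Finset.card_erase_of_mem hu]; omega
      have hvB : v ∈ B := mem_of_mem_erase hv
      have hvu : v ≠ u := ne_of_mem_erase hv
      rw [hmemB] at hu hvB
      have vi : v ≠ i := fun h => by rw [h] at hvB; linarith
      have h3 := hnegs u v (Ne.symm hvu) hu hvB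
      have s1 := hsum i u (Ne.symm ui)
      have s2 := hsum i v (Ne.symm vi)
      rcases s1 with h | h | h <;> rcases s2 with h' | h' | h' <;> linarith
    have hhalfneg : ∀ i : Fin n, σ i < 0 → σ i = -1/2 := by
      intro i hi
      obtain ⟨j, hj, hji⟩ := hmate B hB2 i
      rw [hmemB] at hj
      have hlt1 : -1 < σ i := by
        have := hnegs i j (Ne.symm hji) hi hj
        linarith
      obtain ⟨u, hu, ui⟩ := hmate A hA2 i
      obtain ⟨v, hv⟩ : (A.erase u).Nonempty := by
        rw [← Finset.card_pos, Finset.card_erase_of_mem hu]; omega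
      have hvA : v ∈ A := mem_of_mem_erase hv
      have hvu : v ≠ u := ne_of_mem_erase hv
      rw [hmemA] at hu hvA
      have vi : v ≠ i := fun h => by rw [h] at hvA; linarith
      have h3 := hposs u v (Ne.symm hvu) hu hvA
      have s1 := hsum i u (Ne.symm ui)
      have s2 := hsum i v (Ne.symm vi)
      rcases s1 with h | h | h <;> rcases s2 with h' | h' | h' <;> linarith
    right
    have hdisj : Disjoint A B := by
      rw [Finset.disjoint_left]
      intro x hxA hxB
      rw [hmemA] at hxA
      rw [hmemB] at hxB
      linarith
    have hunion : A ∪ B = Finset.univ := by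
      ext x
      simp only [mem_union, mem_univ, iff_true, hmemA, hmemB]
      exact htri x
    have hcardsum : A.card + B.card = n := by
      have := Finset.card_union_of_disjoint hdisj
      rw [hunion, card_univ, Fintype.card_fin] at this
      omega
    have hcards : A.card = B.card := by
      have hsplit : (0:ℝ) = ∑ i ∈ A, σ i + ∑ i ∈ B, σ i := by
        rw [← hT, ← sum_union hdisj, hunion]
      have hAs : ∑ i ∈ A, σ i = (A.card : ℝ) * (1/2) := by
        rw [sum_congr rfl (fun i hi => hhalfpos i ((hmemA i).mp hi)), sum_const, nsmul_eq_mul]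
      have hBs : ∑ i ∈ B, σ i = (B.card : ℝ) * (-1/2) := by
        rw [sum_congr rfl (fun i hi => hhalfneg i ((hmemB i).mp hi)), sum_const, nsmul_eq_mul]
      rw [hAs, hBs] at hsplit
      have : (A.card : ℝ) = (B.card : ℝ) := by linarith
      exact_mod_cast this
    refine ⟨A, B, hdisj, hunion, hcards, by omega, ?_⟩
    intro x hx2
    obtain ⟨i, j, hij, rfl⟩ := card_eq_two.mp hx2
    rw [hfσ i j hij]
    have hsubA : (({i,j} : Finset (Fin n)) ⊆ A) ↔ (0 < σ i ∧ 0 < σ j) := by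
      rw [insert_subset_iff, singleton_subset_iff, hmemA, hmemA]
    have hsubB : (({i,j} : Finset (Fin n)) ⊆ B) ↔ (σ i < 0 ∧ σ j < 0) := by
      rw [insert_subset_iff, singleton_subset_iff, hmemB, hmemB]
    split_ifs with h1 h2
    · rw [hsubA] at h1
      rw [hhalfpos i h1.1, hhalfpos j h1.2]
      norm_num
    · rw [hsubB] at h2
      rw [hhalfneg i h2.1, hhalfneg j h2.2]
      norm_num
    · rw [hsubA] at h1
      rw [hsubB] at h2
      rcases htri i with hi | hi <;> rcases htri j with hj | hj
      · exact absurd ⟨hi, hj⟩ h1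
      · rw [hhalfpos i hi, hhalfneg j hj]; ring
      · rw [hhalfneg i hi, hhalfpos j hj]; ring
      · exact absurd ⟨hi, hj⟩ h2
end
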